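/- arXiv:1210.8010 — 10 statements merged into one kernel-verified Lean document; each statement's English description precedes it below -/
import Mathlib

section
/- If X is a Lindelöf space and there exists a Lindelöf space Z such that X × Z is not Lindelöf, then there exists a Lindelöf space Z' which is zero-dimensional and T1 (hence regular) such that X × Z' is not Lindelöf. -/
universe u v

open Set TopologicalSpace

/-- The product of a Lindelöf space and a compact space is Lindelöf. -/
theorem lindelofSpace_prod_compactSpace {α : Type*} {β : Type*} [TopologicalSpace α]
    [TopologicalSpace β] [LindelofSpace α] [CompactSpace β] : LindelofSpace (α × β) := by
  constructor
  apply isLindelof_of_countable_subcover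
  intro ι U hU hcov
  have key : ∀ a : α, ∃ (w : Set α) (t : Finset ι), IsOpen w ∧ a ∈ w ∧
      w ×ˢ (univ : Set β) ⊆ ⋃ i ∈ t, U i := by
    intro a
    have hc : IsCompact (({a} : Set α) ×ˢ (univ : Set β)) :=
      isCompact_singleton.prod isCompact_univ
    obtain ⟨t, ht⟩ := hc.elim_finite_subcover U hU (fun p _ => hcov (mem_univ p))
    obtain ⟨w, vv, hw, _, hsw, hsv, hwv⟩ :=
      generalized_tube_lemma isCompact_singleton isCompact_univ
        (isOpen_biUnion fun i _ => hU i) ht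
    exact ⟨w, t, hw, hsw rfl, fun p hp => hwv ⟨hp.1, hsv (mem_univ _)⟩⟩
  choose w t hw haw hsub using key
  obtain ⟨s, hs, hscov⟩ := isLindelof_univ.elim_countable_subcover w hw
    (fun a _ => mem_iUnion.2 ⟨a, haw a⟩)
  refine ⟨⋃ a ∈ s, (t a : Set ι), hs.biUnion (fun a _ => (t a).countable_toSet), ?_⟩
  rintro ⟨x, y⟩ -
  obtain ⟨a, ha, hx⟩ := mem_iUnion₂.1 (hscov (mem_univ x))
  obtain ⟨i, hi, hxy⟩ := mem_iUnion₂.1 (hsub a (Set.mk_mem_prod hx (mem_univ y)))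
  exact mem_iUnion₂.2 ⟨i, mem_iUnion₂.2 ⟨a, ha, hi⟩, hxy⟩

/-- If `X` is Lindelöf and there is a Lindelöf `Z` with `X × Z` not Lindelöf, then there is
a Lindelöf, zero-dimensional (basis of clopen sets), T1 space `Z'` with `X × Z'` not Lindelöf. -/
theorem stmt0 {X : Type u} {Z : Type v} [TopologicalSpace X] [TopologicalSpace Z]
    [LindelofSpace X] [LindelofSpace Z] (h : ¬ LindelofSpace (X × Z)) :
    ∃ (Z' : Type (max u v)) (_ : TopologicalSpace Z'),
      LindelofSpace Z' ∧ T1Space Z' ∧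
      (∃ B : Set (Set Z'), (∀ s ∈ B, IsClopen s) ∧ TopologicalSpace.IsTopologicalBasis B) ∧
      ¬ LindelofSpace (X × Z') := by
  classical
  -- Extract an open cover of `X × Z` with no countable subcover.
  have h2 : ¬ ∀ (ι : Type (max u v)) (U : ι → Set (X × Z)), (∀ i, IsOpen (U i)) →
      ((univ : Set (X × Z)) ⊆ ⋃ i, U i) →
      ∃ t : Set ι, t.Countable ∧ (univ : Set (X × Z)) ⊆ ⋃ i ∈ t, U i := by
    intro hk
    exact h ⟨isLindelof_of_countable_subcover fun {ι} U hU hc => hk ι U hU hc⟩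
  push_neg at h2
  obtain ⟨ι, U, hUopen, hUcov, hbad⟩ := h2
  -- Refine to a cover by open rectangles, indexed by the points of `X × Z`.
  have hpi : ∀ p : X × Z, ∃ i, p ∈ U i := fun p => mem_iUnion.1 (hUcov (mem_univ p))
  choose idx hidx using hpi
  have hrect : ∀ p : X × Z, ∃ (u : Set X) (w : Set Z), IsOpen u ∧ IsOpen w ∧
      p.1 ∈ u ∧ p.2 ∈ w ∧ u ×ˢ w ⊆ U (idx p) := fun p =>
    (isOpen_prod_iff.1 (hUopen (idx p))) p.1 p.2 (hidx p)
  choose 𝒰 𝒱 h𝒰o h𝒱o h𝒰m h𝒱m hsubU using hrect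
  -- The witness space: a subspace of the Cantor cube `2 ^ (X × Z)`.
  set Z' : Set ((X × Z) → Bool) := {f | ∃ z : Z, ∀ p, z ∈ 𝒱 p → f p = true} with hZ'def
  refine ⟨↥Z', inferInstance, ?_, inferInstance, ?_, ?_⟩
  · -- Lindelöf: `Z'` is a continuous image of a closed subset of `Z × 2 ^ (X × Z)`.
    set T : Set (Z × ((X × Z) → Bool)) := {q | ∀ p, q.1 ∈ 𝒱 p → q.2 p = true} with hTdef
    have hTclosed : IsClosed T := by
      rw [← isOpen_compl_iff]
      have hc : Tᶜ = ⋃ p, (𝒱 p) ×ˢ ((fun f : (X × Z) → Bool => f p) ⁻¹' {false}) := by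
        ext q
        simp only [hTdef, mem_compl_iff, mem_setOf_eq, not_forall, mem_iUnion, mem_prod,
          mem_preimage, mem_singleton_iff, Bool.not_eq_true]
        tauto
      rw [hc]
      exact isOpen_iUnion fun p =>
        (h𝒱o p).prod ((isOpen_discrete _).preimage (continuous_apply p))
    haveI : LindelofSpace (Z × ((X × Z) → Bool)) := lindelofSpace_prod_compactSpace
    have hTlin : IsLindelof T := by
      have := (isLindelof_univ (X := Z × ((X × Z) → Bool))).inter_right hTclosed
      rwa [univ_inter] at this
    have himg : Z' = Prod.snd '' T := by
      ext f
      constructor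
      · rintro ⟨z, hz⟩; exact ⟨(z, f), hz, rfl⟩
      · rintro ⟨⟨z, g⟩, hq, rfl⟩; exact ⟨z, hq⟩
    exact isLindelof_iff_LindelofSpace.1 (himg ▸ hTlin.image continuous_snd)
  · -- Zero-dimensional: the clopen subsets form a basis.
    refine ⟨{s : Set ↥Z' | IsClopen s}, fun s hs => hs, ?_⟩
    apply isTopologicalBasis_of_isOpen_of_nhds (fun s hs => hs.isOpen)
    intro a uu hau huu
    obtain ⟨O, hO, rfl⟩ := isOpen_induced_iff.1 huu
    have hbasis := isTopologicalBasis_pi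
      (T := fun _ : X × Z => {s : Set Bool | ∃ b, s = {b}})
      (fun _ => isTopologicalBasis_singletons Bool)
    obtain ⟨S, hSmem, haS, hSO⟩ := hbasis.exists_subset_of_mem_open hau hO
    obtain ⟨Us, Fs, hUs, rfl⟩ := hSmem
    have hSclopen : IsClopen ((Fs : Set (X × Z)).pi Us) := by
      rw [Set.pi_def]
      apply isClopen_biInter_finset
      intro i hi
      obtain ⟨b, hb⟩ := hUs i hi
      rw [hb]
      exact (isClopen_discrete _).preimage (continuous_apply i)
    exact ⟨Subtype.val ⁻¹' _, hSclopen.preimage continuous_subtype_val, haS,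
      fun y hy => hSO hy⟩
  · -- `X × Z'` is not Lindelöf.
    intro hL
    haveI := hL
    set C : (X × Z) → Set (X × ↥Z') :=
      fun p => (𝒰 p) ×ˢ (Subtype.val ⁻¹' {f : (X × Z) → Bool | f p = true}) with hCdef
    have hCopen : ∀ p, IsOpen (C p) := fun p =>
      (h𝒰o p).prod (by
        have hev : Continuous fun f : (X × Z) → Bool => f p := continuous_apply p
        exact ((isOpen_discrete {b : Bool | b = true}).preimage hev).preimage
          continuous_subtype_val)
    have hCcov : (univ : Set (X × ↥Z')) ⊆ ⋃ p, C p := by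
      rintro ⟨x, f, z, hz⟩ -
      exact mem_iUnion.2 ⟨(x, z), ⟨h𝒰m (x, z), hz (x, z) (h𝒱m (x, z))⟩⟩
    obtain ⟨t, htc, htcov⟩ :=
      (isLindelof_univ (X := X × ↥Z')).elim_countable_subcover C hCopen hCcov
    refine hbad (idx '' t) (htc.image idx) ?_
    rintro ⟨x, z⟩ -
    have key : ∃ p ∈ t, x ∈ 𝒰 p ∧ z ∈ 𝒱 p := by
      by_contra hno
      push_neg at hno
      set f₀ : (X × Z) → Bool :=
        fun p => if p ∈ t then (if z ∈ 𝒱 p then true else false) else true with hf₀def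
      have hf₀ : f₀ ∈ Z' := by
        refine ⟨z, fun p hp => ?_⟩
        by_cases h1 : p ∈ t <;> simp [hf₀def, h1, hp]
      obtain ⟨p, hpt, hmem⟩ := mem_iUnion₂.1 (htcov (mem_univ (x, ⟨f₀, hf₀⟩)))
      have hx𝒰 : x ∈ 𝒰 p := hmem.1
      have hfp : f₀ p = true := hmem.2
      have hz𝒱 : z ∈ 𝒱 p := by
        by_cases h1 : z ∈ 𝒱 p
        · exact h1
        · simp [hf₀def, hpt, h1] at hfp
      exact hno p hpt hx𝒰 hz𝒱
    obtain ⟨p, hpt, hx, hz⟩ := key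
    exact mem_iUnion₂.2 ⟨idx p, mem_image_of_mem idx hpt, hsubU p ⟨hx, hz⟩⟩
end

section
/- Let X be a Lindelöf space and {U_α × V_α : α < κ} an open cover of X × Z by basic open rectangles with no countable subcover. Define Φ_X : X → 2^(2^κ) by Φ_X(x) = {A ⊆ κ : {α : x ∈ U_α} ⊆ A}, where 2^κ carries the product topology. Then Φ_X is compact-valued and upper semicontinuous. -/
universe u v w

/-- The set-valued map `Φ_X : X → 2^(2^κ)`, `Φ_X x = {A ⊆ κ : {α : x ∈ U α} ⊆ A}`,
is compact-valued and upper semicontinuous, where `2^κ` (here `κ → Bool`) carries the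
product topology. -/
theorem stmt2 {X : Type u} {Z : Type v} {κ : Type w} [TopologicalSpace X] [TopologicalSpace Z]
    [LindelofSpace X]
    (U : κ → Set X) (V : κ → Set Z)
    (hU : ∀ α, IsOpen (U α)) (hV : ∀ α, IsOpen (V α))
    (hcov : ⋃ α, (U α ×ˢ V α) = Set.univ)
    (hnc : ¬ ∃ S : Set κ, S.Countable ∧ ⋃ α ∈ S, (U α ×ˢ V α) = Set.univ) :
    (∀ x : X, IsCompact {A : κ → Bool | ∀ α, x ∈ U α → A α = true}) ∧
    (∀ x : X, ∀ O : Set (κ → Bool), IsOpen O →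
      {A : κ → Bool | ∀ α, x ∈ U α → A α = true} ⊆ O →
      ∃ W : Set X, IsOpen W ∧ x ∈ W ∧
        ∀ x' ∈ W, {A : κ → Bool | ∀ α, x' ∈ U α → A α = true} ⊆ O) := by
  have hClosed : ∀ x : X, IsClosed {A : κ → Bool | ∀ α, x ∈ U α → A α = true} := by
    intro x
    have h : {A : κ → Bool | ∀ α, x ∈ U α → A α = true} =
        ⋂ α ∈ {α | x ∈ U α}, {A : κ → Bool | A α = true} := by
      ext A; simp [Set.mem_iInter]
    rw [h]
    exact isClosed_biInter fun α _ => isClosed_eq (continuous_apply α) continuous_const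
  refine ⟨fun x => (hClosed x).isCompact, ?_⟩
  intro x O hO hsub
  have hKc : IsCompact Oᶜ := hO.isClosed_compl.isCompact
  have hdisj : Oᶜ ∩ ⋂ α : {α // x ∈ U α}, {A : κ → Bool | A α.1 = true} = ∅ := by
    ext A
    simp only [Set.mem_inter_iff, Set.mem_compl_iff, Set.mem_iInter, Set.mem_setOf_eq,
      Set.mem_empty_iff_false, iff_false, not_and]
    intro hAO hall
    exact hAO (hsub fun α hα => hall ⟨α, hα⟩)
  obtain ⟨t, ht⟩ := hKc.elim_finite_subfamily_closed _
    (fun α : {α // x ∈ U α} => isClosed_eq (continuous_apply α.1) continuous_const) hdisj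
  refine ⟨⋂ α ∈ t, U α.1, isOpen_biInter_finset fun α _ => hU α.1, ?_, ?_⟩
  · exact Set.mem_biInter fun α _ => α.2
  · intro x' hx' A hA
    by_contra hAO
    have : A ∈ Oᶜ ∩ ⋂ α ∈ t, {A : κ → Bool | A α.1 = true} := by
      refine ⟨hAO, Set.mem_biInter fun α hα => ?_⟩
      exact hA α.1 (Set.mem_iInter₂.mp hx' α hα)
    rw [ht] at this
    exact this
end

section
/- If X is a productively Lindelöf Rothberger space, then X is projectively countable, i.e., every continuous image of X in a separable metrizable space is countable. -/
universe u

/-- `X` is productively Lindelöf: `X × Y` is Lindelöf for every Lindelöf `Y`. -/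
def ProductivelyLindelof (X : Type u) [TopologicalSpace X] : Prop :=
  ∀ (Y : Type u) (_ : TopologicalSpace Y), LindelofSpace Y → LindelofSpace (X × Y)

/-- `X` is Rothberger: for every sequence of open covers one can select one member from
each so that the selections cover `X`. -/
def RothbergerSpace (X : Type u) [TopologicalSpace X] : Prop :=
  ∀ U : ℕ → Set (Set X), (∀ n, (∀ s ∈ U n, IsOpen s) ∧ ⋃₀ U n = Set.univ) →
    ∃ V : ℕ → Set X, (∀ n, V n ∈ U n) ∧ ⋃ n, V n = Set.univ

open Set TopologicalSpace

section RothAux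

/-- Rothberger is preserved by continuous surjections. -/
lemma roth_image {A : Type*} {B : Type*} [TopologicalSpace A] [TopologicalSpace B]
    {p : A → B} (hc : Continuous p) (hs : Function.Surjective p)
    (hA : RothbergerSpace A) : RothbergerSpace B := by
  intro U hU
  have hcov : ∀ n, (∀ s ∈ (fun s => p ⁻¹' s) '' U n, IsOpen s) ∧
      ⋃₀ ((fun s => p ⁻¹' s) '' U n) = Set.univ := by
    intro n
    constructor
    · rintro _ ⟨t, ht, rfl⟩
      exact ((hU n).1 t ht).preimage hc
    · apply Set.eq_univ_of_forall
      intro a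
      have : p a ∈ ⋃₀ U n := by rw [(hU n).2]; trivial
      obtain ⟨t, ht, hpt⟩ := this
      exact ⟨p ⁻¹' t, ⟨t, ht, rfl⟩, hpt⟩
  obtain ⟨V, hV, hVcov⟩ := hA (fun n => (fun s => p ⁻¹' s) '' U n) hcov
  simp only [Set.mem_image] at hV
  choose s hs1 hs2 using hV
  refine ⟨s, hs1, ?_⟩
  apply Set.eq_univ_of_forall
  intro b
  obtain ⟨a, rfl⟩ := hs b
  have ha : a ∈ ⋃ n, V n := by rw [hVcov]; trivial
  obtain ⟨n, hn⟩ := Set.mem_iUnion.1 ha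
  rw [← hs2 n] at hn
  exact Set.mem_iUnion.2 ⟨n, hn⟩

/-- Rothberger is inherited by nonempty closed subspaces. -/
lemma roth_closed {B : Type*} [TopologicalSpace B] {A : Set B} (hA : IsClosed A)
    (hne : A.Nonempty) (hB : RothbergerSpace B) : RothbergerSpace ↥A := by
  classical
  intro U hU
  have hex : ∀ n, ∃ t : Set B, IsOpen t ∧ (Subtype.val ⁻¹' t : Set ↥A) ∈ U n := by
    intro n
    obtain ⟨a, ha⟩ := hne
    have : (⟨a, ha⟩ : ↥A) ∈ ⋃₀ U n := by rw [(hU n).2]; trivial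
    obtain ⟨s, hsU, hsa⟩ := this
    obtain ⟨t, ht, rfl⟩ := isOpen_induced_iff.1 ((hU n).1 s hsU)
    exact ⟨t, ht, hsU⟩
  have hWcov : ∀ n, (∀ s ∈ ({t : Set B | IsOpen t ∧ (Subtype.val ⁻¹' t : Set ↥A) ∈ U n} ∪ {Aᶜ}),
      IsOpen s) ∧ ⋃₀ ({t : Set B | IsOpen t ∧ (Subtype.val ⁻¹' t : Set ↥A) ∈ U n} ∪ {Aᶜ})
        = Set.univ := by
    intro n
    constructor
    · rintro t (⟨h1, -⟩ | h2)
      · exact h1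
      · rw [Set.mem_singleton_iff] at h2
        rw [h2]
        exact hA.isOpen_compl
    · apply Set.eq_univ_of_forall
      intro b
      by_cases hb : b ∈ A
      · have : (⟨b, hb⟩ : ↥A) ∈ ⋃₀ U n := by rw [(hU n).2]; trivial
        obtain ⟨s, hsU, hsb⟩ := this
        obtain ⟨t, ht, rfl⟩ := isOpen_induced_iff.1 ((hU n).1 s hsU)
        exact ⟨t, Or.inl ⟨ht, hsU⟩, hsb⟩
      · exact ⟨Aᶜ, Or.inr rfl, hb⟩
  obtain ⟨T, hT, hTcov⟩ := hB
      (fun n => {t : Set B | IsOpen t ∧ (Subtype.val ⁻¹' t : Set ↥A) ∈ U n} ∪ {Aᶜ}) hWcov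
  refine ⟨fun n => if h : IsOpen (T n) ∧ (Subtype.val ⁻¹' T n : Set ↥A) ∈ U n
      then Subtype.val ⁻¹' T n else Subtype.val ⁻¹' (hex n).choose, ?_, ?_⟩
  · intro n
    by_cases h : IsOpen (T n) ∧ (Subtype.val ⁻¹' T n : Set ↥A) ∈ U n
    · simp only [dif_pos h]; exact h.2
    · simp only [dif_neg h]; exact (hex n).choose_spec.2
  · apply Set.eq_univ_of_forall
    rintro ⟨a, ha⟩
    have haT : a ∈ ⋃ n, T n := by rw [hTcov]; trivial
    obtain ⟨n, hn⟩ := Set.mem_iUnion.1 haT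
    rcases hT n with h1 | h2
    · have h1' : IsOpen (T n) ∧ (Subtype.val ⁻¹' T n : Set ↥A) ∈ U n := h1
      refine Set.mem_iUnion.2 ⟨n, ?_⟩
      simp only [dif_pos h1']
      exact hn
    · rw [Set.mem_singleton_iff] at h2
      rw [h2] at hn
      exact absurd ha hn

/-- The Cantor space is not Rothberger. -/
lemma cantor_not_roth : ¬ RothbergerSpace (ℕ → Bool) := by
  intro h
  have hcovs : ∀ n, (∀ s ∈ Set.range (fun s : ℕ → Bool => {y : ℕ → Bool | ∀ i ≤ n, y i = s i}),
      IsOpen s) ∧ ⋃₀ Set.range (fun s : ℕ → Bool => {y : ℕ → Bool | ∀ i ≤ n, y i = s i})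
        = Set.univ := by
    intro n
    constructor
    · rintro _ ⟨s, rfl⟩
      show IsOpen {y : ℕ → Bool | ∀ i ≤ n, y i = s i}
      have : {y : ℕ → Bool | ∀ i ≤ n, y i = s i}
          = ⋂ i ∈ Finset.range (n + 1), (fun y : ℕ → Bool => y i) ⁻¹' {s i} := by
        ext y
        simp only [Set.mem_setOf_eq, Set.mem_iInter, Set.mem_preimage, Set.mem_singleton_iff,
          Finset.mem_range, Nat.lt_succ_iff]
      rw [this]
      exact isOpen_biInter_finset fun i _ =>
        (isOpen_discrete _).preimage (continuous_apply i)
    · apply Set.eq_univ_of_forall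
      intro y
      exact ⟨{z : ℕ → Bool | ∀ i ≤ n, z i = y i}, ⟨y, rfl⟩, fun i _ => rfl⟩
  obtain ⟨V, hV, hcov⟩ := h
      (fun n => Set.range (fun s : ℕ → Bool => {y : ℕ → Bool | ∀ i ≤ n, y i = s i})) hcovs
  choose s hs using hV
  set x : ℕ → Bool := fun n => !(s n n) with hx
  have hxmem : x ∈ ⋃ n, V n := by rw [hcov]; trivial
  obtain ⟨n, hn⟩ := Set.mem_iUnion.1 hxmem
  rw [← hs n] at hn
  have := hn n le_rfl
  exact Bool.not_ne_self (s n n) this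

/-- In a Polish space, a closed set contained in a set whose subspace is Rothberger
is countable. -/
lemma closed_subset_countable {B : Type*} [TopologicalSpace B] [PolishSpace B]
    {S : Set B} (hroth : RothbergerSpace ↥S) {R : Set B} (hRc : IsClosed R) (hRS : R ⊆ S) :
    R.Countable := by
  by_contra hunc
  letI := upgradeIsCompletelyMetrizable B
  obtain ⟨c, hcr, hcont, hcinj⟩ := hRc.exists_nat_bool_injection_of_not_countable hunc
  have hce := hcont.isClosedEmbedding hcinj
  have hCS : Set.range c ⊆ S := fun x hx => hRS (hcr hx)
  set A : Set ↥S := Subtype.val ⁻¹' Set.range c with hAdef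
  have hAclosed : IsClosed A := hce.isClosed_range.preimage continuous_subtype_val
  have hAne : A.Nonempty :=
    ⟨⟨c (fun _ => false), hCS ⟨_, rfl⟩⟩, ⟨fun _ => false, rfl⟩⟩
  have hrothA : RothbergerSpace ↥A := roth_closed hAclosed hAne hroth
  set e : (ℕ → Bool) ≃ₜ ↥(Set.range c) := hce.toIsEmbedding.toHomeomorph with he
  set φ : ↥A → ↥(Set.range c) := fun a => ⟨a.1.1, a.2⟩ with hφ
  have hφc : Continuous φ :=
    Continuous.subtype_mk (continuous_subtype_val.comp continuous_subtype_val) _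
  have hsurj : Function.Surjective (fun a => e.symm (φ a)) := by
    intro y
    have hy : c y ∈ Set.range c := ⟨y, rfl⟩
    refine ⟨⟨⟨c y, hCS hy⟩, hy⟩, ?_⟩
    have h1 : φ ⟨⟨c y, hCS hy⟩, hy⟩ = e y := Subtype.ext rfl
    simp only [h1, Homeomorph.symm_apply_apply]
  exact cantor_not_roth (roth_image (e.symm.continuous.comp hφc) hsurj hrothA)

end RothAux

section Michael

/-- Type synonym carrying the "Michael line"-type topology: the original topology refined by
making every point of `S` isolated. -/
def MSp (B : Type*) [TopologicalSpace B] (S : Set B) : Type _ := B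

/-- The identity map `B → MSp B S`. -/
def MSp.up {B : Type*} [TopologicalSpace B] (S : Set B) (b : B) : MSp B S := b

/-- The identity map `MSp B S → B`. -/
def MSp.down {B : Type*} [TopologicalSpace B] (S : Set B) (b : MSp B S) : B := b

instance MSp.instTop (B : Type*) [TopologicalSpace B] (S : Set B) :
    TopologicalSpace (MSp B S) :=
  TopologicalSpace.generateFrom
    ({V : Set B | IsOpen V} ∪ {V : Set B | ∃ x ∈ S, V = {x}})

lemma MSp.isOpen_of {B : Type*} [TopologicalSpace B] (S : Set B) {V : Set B}
    (hV : IsOpen V) : IsOpen (show Set (MSp B S) from V) :=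
  TopologicalSpace.GenerateOpen.basic V (Or.inl hV)

lemma MSp.isOpen_singleton {B : Type*} [TopologicalSpace B] {S : Set B} {s : B}
    (hs : s ∈ S) : IsOpen ({MSp.up S s} : Set (MSp B S)) :=
  TopologicalSpace.GenerateOpen.basic _ (Or.inr ⟨s, hs, rfl⟩)

lemma MSp.continuous_down {B : Type*} [TopologicalSpace B] (S : Set B) :
    Continuous (MSp.down S) := by
  rw [continuous_def]
  intro V hV
  exact MSp.isOpen_of S hV

lemma MSp.exists_open_subset {B : Type*} [TopologicalSpace B] {S : Set B}
    {V : Set (MSp B S)} (hV : IsOpen V) :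
    ∀ x : B, MSp.up S x ∈ V → x ∉ S →
      ∃ W : Set B, IsOpen W ∧ x ∈ W ∧ (show Set B from V) ⊇ W := by
  have hg : TopologicalSpace.GenerateOpen
      ({V : Set B | IsOpen V} ∪ {V : Set B | ∃ x ∈ S, V = {x}}) V := hV
  clear hV
  induction hg with
  | basic V hVm =>
    rcases hVm with h | ⟨y, hy, rfl⟩
    · exact fun x hx _ => ⟨V, h, hx, subset_rfl⟩
    · intro x hx hxS
      have : x = y := hx
      exact absurd (this ▸ hy) hxS
  | univ => exact fun x _ _ => ⟨Set.univ, isOpen_univ, trivial, subset_rfl⟩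
  | inter V1 V2 h1 h2 ih1 ih2 =>
    intro x hx hxS
    obtain ⟨W1, hW1, hxW1, hs1⟩ := ih1 x hx.1 hxS
    obtain ⟨W2, hW2, hxW2, hs2⟩ := ih2 x hx.2 hxS
    exact ⟨W1 ∩ W2, hW1.inter hW2, ⟨hxW1, hxW2⟩, fun z hz => ⟨hs1 hz.1, hs2 hz.2⟩⟩
  | sUnion F hF ih =>
    intro x hx hxS
    obtain ⟨V, hVF, hxV⟩ := hx
    obtain ⟨W, h1, h2, h3⟩ := ih V hVF x hxV hxS
    exact ⟨W, h1, h2, fun z hz => ⟨V, hVF, h3 hz⟩⟩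

/-- The refined space is Lindelöf provided closed subsets of `S` are countable. -/
lemma MSp.lindelof (B : Type*) [TopologicalSpace B] [SecondCountableTopology B] (S : Set B)
    (hcc : ∀ R : Set B, IsClosed R → R ⊆ S → R.Countable) :
    LindelofSpace (MSp B S) := by
  classical
  constructor
  apply isLindelof_of_countable_subcover
  intro ι U hUo hcov
  set W : ι → Set B := fun i => interior (show Set B from U i) with hWdef
  have hWo : ∀ i, IsOpen (W i) := fun i => isOpen_interior
  have hcompl : Sᶜ ⊆ ⋃ i, W i := by
    intro x hx
    have hxU : MSp.up S x ∈ ⋃ i, U i := hcov (Set.mem_univ _)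
    obtain ⟨i, hi⟩ := Set.mem_iUnion.1 hxU
    obtain ⟨Wx, hWx, hxW, hWsub⟩ := MSp.exists_open_subset (hUo i) x hi hx
    exact Set.mem_iUnion.2 ⟨i, mem_interior.2 ⟨Wx, hWsub, hWx, hxW⟩⟩
  have hLc : IsLindelof (Sᶜ : Set B) := HereditarilyLindelof_LindelofSets _
  obtain ⟨r, hrc, hrcov⟩ := hLc.elim_countable_subcover W hWo hcompl
  set R : Set B := (⋃ i ∈ r, W i)ᶜ with hRdef
  have hRclosed : IsClosed R := (isOpen_biUnion fun i _ => hWo i).isClosed_compl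
  have hRS : R ⊆ S := by
    intro x hx
    by_contra hxS
    exact hx (hrcov hxS)
  have hRcount := hcc R hRclosed hRS
  have hexist : ∀ x : B, ∃ i, MSp.up S x ∈ U i := fun x =>
    Set.mem_iUnion.1 (hcov (Set.mem_univ _))
  choose ix hix using hexist
  refine ⟨r ∪ ix '' R, hrc.union (hRcount.image ix), ?_⟩
  intro x _
  by_cases hxR : MSp.down S x ∈ R
  · exact Set.mem_biUnion (Or.inr (Set.mem_image_of_mem ix hxR)) (hix (MSp.down S x))
  · have hxW : MSp.down S x ∈ ⋃ i ∈ r, W i := not_not.1 hxR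
    obtain ⟨i, hir, hxi⟩ := Set.mem_iUnion₂.1 hxW
    have hmem : MSp.down S x ∈ (show Set B from U i) := interior_subset hxi
    exact Set.mem_biUnion (Or.inl hir) hmem

end Michael

section LindelofAux

lemma lindelof_of_surj {A : Type*} {B : Type*} [TopologicalSpace A] [TopologicalSpace B]
    {p : A → B} (hc : Continuous p) (hs : Function.Surjective p) [LindelofSpace A] :
    LindelofSpace B :=
  ⟨by simpa [Set.image_univ, hs.range_eq] using isLindelof_univ.image hc⟩

end LindelofAux

/-- Productively Lindelöf Rothberger spaces are projectively countable. -/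
theorem stmt4 {X : Type u} [TopologicalSpace X]
    (hp : ProductivelyLindelof X) (hr : RothbergerSpace X)
    (Y : Type u) [TopologicalSpace Y] [TopologicalSpace.SeparableSpace Y]
    [TopologicalSpace.MetrizableSpace Y] (f : X → Y) (hf : Continuous f) :
    (Set.range f).Countable := by
  classical
  by_contra hcount
  letI : MetricSpace Y := TopologicalSpace.metrizableSpaceMetric Y
  haveI : SecondCountableTopology Y := UniformSpace.secondCountable_of_separable Y
  obtain ⟨e, he⟩ := exists_embedding_l_infty Y
  set g0 : X → (BoundedContinuousFunction ℕ ℝ) := fun x => e (f x) with hg0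
  have hg0c : Continuous g0 := he.continuous.comp hf
  set B0 : Set (BoundedContinuousFunction ℕ ℝ) := closure (Set.range g0) with hB0
  have hsep : IsSeparable (Set.range g0) := by
    have h1 : IsSeparable (Set.range f) := IsSeparable.of_separableSpace _
    have h2 : Set.range g0 = e '' Set.range f := by
      ext z
      constructor
      · rintro ⟨x, rfl⟩
        exact ⟨f x, ⟨x, rfl⟩, rfl⟩
      · rintro ⟨y, ⟨x, rfl⟩, rfl⟩
        exact ⟨x, rfl⟩
    rw [h2]
    exact h1.image he.continuous
  haveI : SeparableSpace ↥B0 := (hsep.closure).separableSpace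
  haveI : SecondCountableTopology ↥B0 := UniformSpace.secondCountable_of_separable _
  haveI : CompleteSpace ↥B0 := isClosed_closure.completeSpace_coe
  haveI : PolishSpace ↥B0 := inferInstance
  set g : X → ↥B0 := fun x => ⟨g0 x, subset_closure (Set.mem_range_self x)⟩ with hg
  have hgc : Continuous g := hg0c.subtype_mk _
  set S : Set ↥B0 := Set.range g with hS
  have hSunc : ¬ S.Countable := by
    intro hc
    apply hcount
    have h1 : (Set.range g0).Countable := by
      have heq : Set.range g0 = Subtype.val '' S := by
        ext z
        constructor
        · rintro ⟨x, rfl⟩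
          exact ⟨g x, ⟨x, rfl⟩, rfl⟩
        · rintro ⟨w, ⟨x, rfl⟩, rfl⟩
          exact ⟨x, rfl⟩
      rw [heq]
      exact hc.image _
    have h2 : Set.range f ⊆ e ⁻¹' (Set.range g0) := by
      rintro y ⟨x, rfl⟩
      exact ⟨x, rfl⟩
    exact ((h1.preimage he.injective).mono h2)
  have hrothS : RothbergerSpace ↥S :=
    roth_image (p := Set.rangeFactorization g) (hgc.subtype_mk _)
      Set.rangeFactorization_surjective hr
  have hcc : ∀ R : Set ↥B0, IsClosed R → R ⊆ S → R.Countable :=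
    fun R h1 h2 => closed_subset_countable hrothS h1 h2
  haveI hLM : LindelofSpace (MSp ↥B0 S) := MSp.lindelof _ S hcc
  haveI hLU : LindelofSpace (ULift.{u} (MSp ↥B0 S)) :=
    lindelof_of_surj (Homeomorph.ulift.symm.continuous) (Homeomorph.ulift.symm.surjective)
  haveI hPL : LindelofSpace (X × ULift.{u} (MSp ↥B0 S)) :=
    hp (ULift.{u} (MSp ↥B0 S)) _ hLU
  set D : Set (X × ULift.{u} (MSp ↥B0 S)) :=
    {q | MSp.up S (g q.1) = q.2.down} with hD
  have hDc : IsClosed D := by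
    rw [← isOpen_compl_iff]
    rw [isOpen_iff_forall_mem_open]
    intro q hq
    have hne : g q.1 ≠ MSp.down S q.2.down := fun h => hq (congrArg (MSp.up S) h)
    obtain ⟨Uo, Vo, hUoo, hVoo, haU, hbV, hdisj⟩ := t2_separation hne
    refine ⟨(g ⁻¹' Uo) ×ˢ ((fun m : ULift.{u} (MSp ↥B0 S) => MSp.down S m.down) ⁻¹' Vo),
      ?_, ?_, ⟨haU, hbV⟩⟩
    · rintro ⟨x, m⟩ ⟨hx1, hx2⟩ hxD
      have hgx : g x = MSp.down S m.down := hxD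
      have hx1' : g x ∈ Uo := hx1
      have hx2' : MSp.down S m.down ∈ Vo := hx2
      rw [hgx] at hx1'
      exact Set.disjoint_iff.1 hdisj ⟨hx1', hx2'⟩
    · exact (hUoo.preimage hgc).prod
        (hVoo.preimage ((MSp.continuous_down S).comp continuous_uliftDown))
  have hDl : IsLindelof D := hDc.isLindelof
  have himg : IsLindelof ((fun q : X × ULift.{u} (MSp ↥B0 S) => q.2.down) '' D) :=
    hDl.image (continuous_uliftDown.comp continuous_snd)
  have hicov : ((fun q : X × ULift.{u} (MSp ↥B0 S) => q.2.down) '' D)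
      ⊆ ⋃ s : ↥S, ({MSp.up S s.1} : Set (MSp ↥B0 S)) := by
    rintro z ⟨⟨x, m⟩, hqD, rfl⟩
    exact Set.mem_iUnion.2 ⟨⟨g x, ⟨x, rfl⟩⟩, hqD.symm⟩
  obtain ⟨t, htc, htcov⟩ := himg.elim_countable_subcover
    (fun s : ↥S => ({MSp.up S s.1} : Set (MSp ↥B0 S)))
    (fun s => MSp.isOpen_singleton s.2) hicov
  apply hSunc
  have hsub : S ⊆ Subtype.val '' t := by
    rintro z ⟨x, rfl⟩
    have hmem : MSp.up S (g x) ∈ (fun q : X × ULift.{u} (MSp ↥B0 S) => q.2.down) '' D :=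
      ⟨⟨x, ULift.up (MSp.up S (g x))⟩, rfl, rfl⟩
    obtain ⟨s, hst, hz⟩ := Set.mem_iUnion₂.1 (htcov hmem)
    have : g x = s.1 := hz
    exact ⟨s, hst, this.symm⟩
  exact ((htc.image _).mono hsub)
end

section
/- Every ℵ_1-Hurewicz, ℵ_1-Čech-complete Tychonoff space is ℵ_1-compact (the union of ℵ_1 compact sets). -/
universe u

open Topology Filter Set

lemma isInducing_stoneCechUnit' {X : Type u} [TopologicalSpace X] [T35Space X] :
    Topology.IsInducing (stoneCechUnit : X → StoneCech X) := by
  rw [Topology.isInducing_iff_nhds]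
  intro x
  refine le_antisymm (continuous_stoneCechUnit.tendsto x).le_comap ?_
  intro U hU
  obtain ⟨V, hVU, hVopen, hxV⟩ := mem_nhds_iff.mp hU
  obtain ⟨f, hf, hfx, hfK⟩ := CompletelyRegularSpace.completely_regular x Vᶜ
    hVopen.isClosed_compl (by simpa using hxV)
  refine Filter.mem_comap.mpr ⟨stoneCechExtend hf ⁻¹' {(1 : unitInterval)}ᶜ, ?_, ?_⟩
  · refine ((isOpen_compl_singleton).preimage (continuous_stoneCechExtend hf)).mem_nhds ?_
    have : stoneCechExtend hf (stoneCechUnit x) = f x := congrFun (stoneCechExtend_extends hf) x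
    simp only [Set.mem_preimage, Set.mem_compl_iff, Set.mem_singleton_iff, this, hfx]
    exact fun h => zero_ne_one (α := unitInterval) h
  · intro y hy
    simp only [Set.mem_preimage, Set.mem_compl_iff, Set.mem_singleton_iff] at hy
    rw [show stoneCechExtend hf (stoneCechUnit y) = f y from
      congrFun (stoneCechExtend_extends hf) y] at hy
    apply hVU
    by_contra hyV
    exact hy (hfK hyV)


open Topology Filter Set


/-- The ordinals below `ω₁`. -/
abbrev Om1 : Type 1 := {o : Ordinal.{0} // o < (Cardinal.aleph 1).ord}

/-- `X` is `ℵ₁`-Hurewicz: whenever `ω₁` many open sets of `βX` each contain (the copy of)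
`X`, there are `ω₁` many closed sets of `βX` whose union squeezes between `X` and the
intersection of the open sets. -/
def Aleph1Hurewicz (X : Type u) [TopologicalSpace X] : Prop :=
  ∀ U : Om1 → Set (StoneCech X),
    (∀ i, IsOpen (U i) ∧ Set.range (stoneCechUnit : X → StoneCech X) ⊆ U i) →
    ∃ F : Om1 → Set (StoneCech X), (∀ i, IsClosed (F i)) ∧
      Set.range (stoneCechUnit : X → StoneCech X) ⊆ (⋃ i, F i) ∧
      (⋃ i, F i) ⊆ ⋂ i, U i

/-- `X` is `ℵ₁`-Čech-complete: there are `ω₁` many open covers of `X` such that any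
centered family of closed sets which, for each `α`, contains a closed set included in some
member of the `α`-th cover, has nonempty intersection. -/
def Aleph1CechComplete (X : Type u) [TopologicalSpace X] : Prop :=
  ∃ U : Om1 → Set (Set X),
    (∀ i, (∀ s ∈ U i, IsOpen s) ∧ ⋃₀ U i = Set.univ) ∧
    ∀ C : Set (Set X), (∀ c ∈ C, IsClosed c) →
      (∀ F : Finset (Set X), ↑F ⊆ C → (⋂₀ (F : Set (Set X))).Nonempty) →
      (∀ i, ∃ c ∈ C, ∃ s ∈ U i, c ⊆ s) →
      (⋂₀ C).Nonempty

/-- `ℵ₁`-Hurewicz, `ℵ₁`-Čech-complete Tychonoff spaces are unions of `ℵ₁` compact sets. -/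
theorem stmt9 {X : Type u} [TopologicalSpace X] [T35Space X]
    (hH : Aleph1Hurewicz X) (hC : Aleph1CechComplete X) :
    ∃ K : Om1 → Set X, (∀ i, IsCompact (K i)) ∧ (⋃ i, K i) = Set.univ := by
  classical
  set e : X → StoneCech X := stoneCechUnit with he
  have hind : Topology.IsInducing e := isInducing_stoneCechUnit'
  obtain ⟨U, hcov, hcent⟩ := hC
  -- choose open sets in βX pulling back to the members of the covers
  have key : ∀ i, ∀ s ∈ U i, ∃ O : Set (StoneCech X), IsOpen O ∧ e ⁻¹' O = s := by
    intro i s hs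
    exact hind.isOpen_iff.mp ((hcov i).1 s hs)
  choose! O hOopen hOpre using key
  set W : Om1 → Set (StoneCech X) := fun i => ⋃ s ∈ U i, O i s with hW
  have hWopen : ∀ i, IsOpen (W i) ∧ Set.range e ⊆ W i := by
    intro i
    constructor
    · exact isOpen_biUnion fun s hs => hOopen i s hs
    · rintro _ ⟨x, rfl⟩
      have hx : x ∈ ⋃₀ U i := by rw [(hcov i).2]; trivial
      obtain ⟨s, hs, hxs⟩ := hx
      exact Set.mem_biUnion hs (by rw [← hOpre i s hs] at hxs; exact hxs)
  obtain ⟨F, hFcl, hsub, hFsub⟩ := hH W hWopen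
  -- every point of ⋂ W is in the range of e
  have hrange : ∀ p, p ∈ ⋂ i, W i → p ∈ Set.range e := by
    intro p hp
    set C : Set (Set X) := (fun N => e ⁻¹' N) '' {N | N ∈ 𝓝 p ∧ IsClosed N} with hCdef
    have h1 : ∀ c ∈ C, IsClosed c := by
      rintro _ ⟨N, ⟨hN, hNc⟩, rfl⟩
      exact hNc.preimage continuous_stoneCechUnit
    have h2 : ∀ F' : Finset (Set X), ↑F' ⊆ C → (⋂₀ (F' : Set (Set X))).Nonempty := by
      intro F' hF'
      have : ∀ c ∈ F', ∃ N, (N ∈ 𝓝 p ∧ IsClosed N) ∧ e ⁻¹' N = c := fun c hc => hF' hc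
      choose N hN hNe using this
      have hmem : (⋂ c : F', N c.1 c.2) ∈ 𝓝 p :=
        Filter.iInter_mem.mpr fun c => (hN c.1 c.2).1
      obtain ⟨q, hq, hqmem⟩ := mem_nhds_iff.mp hmem
      obtain ⟨x, hx⟩ := denseRange_stoneCechUnit.exists_mem_open hqmem.1
        ⟨p, hqmem.2⟩
      refine ⟨x, ?_⟩
      rintro c hc
      have hexN : e x ∈ N c hc := by
        have := hq hx
        simp only [Set.mem_iInter] at this
        exact this ⟨c, hc⟩
      rw [← hNe c hc]; exact hexN
    have h3 : ∀ i, ∃ c ∈ C, ∃ s ∈ U i, c ⊆ s := by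
      intro i
      have hpW : p ∈ W i := by
        have := Set.mem_iInter.mp hp i; exact this
      obtain ⟨s, hs, hps⟩ := Set.mem_iUnion₂.mp hpW
      have hmem : O i s ∈ 𝓝 p := (hOopen i s hs).mem_nhds hps
      obtain ⟨N, ⟨hN1, hN2⟩, hNsub⟩ := (closed_nhds_basis p).mem_iff.mp hmem
      refine ⟨e ⁻¹' N, ⟨N, ⟨hN1, hN2⟩, rfl⟩, s, hs, ?_⟩
      rw [← hOpre i s hs]
      exact Set.preimage_mono hNsub
    obtain ⟨x, hx⟩ := hcent C h1 h2 h3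
    refine ⟨x, ?_⟩
    by_contra hne
    have hopen : ({e x}ᶜ : Set (StoneCech X)) ∈ 𝓝 p :=
      isOpen_compl_singleton.mem_nhds (by simpa [eq_comm] using hne)
    obtain ⟨N, ⟨hN1, hN2⟩, hNsub⟩ := (closed_nhds_basis p).mem_iff.mp hopen
    have : x ∈ e ⁻¹' N := hx _ ⟨N, ⟨hN1, hN2⟩, rfl⟩
    exact hNsub this rfl
  refine ⟨fun i => e ⁻¹' (F i), fun i => ?_, ?_⟩
  · refine (hind.isCompact_preimage_iff ?_).mpr ((hFcl i).isCompact)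
    intro p hpF
    exact hrange p (hFsub (Set.mem_iUnion.mpr ⟨i, hpF⟩))
  · ext x
    simp only [Set.mem_iUnion, Set.mem_preimage, Set.mem_univ, iff_true]
    have : e x ∈ ⋃ i, F i := hsub ⟨x, rfl⟩
    exact Set.mem_iUnion.mp this
end

section
/- An ℵ_1-Čech-complete Tychonoff space X is a G_{ℵ_1} set in its Stone–Čech compactification: X is the intersection of at most ℵ_1 open subsets of βX. -/
universe u

open Set Topology unitInterval

/-- Every open set of a completely regular space is the preimage of an open subset of the
Stone–Čech compactification. -/
lemma exists_open_preimage_eq {X : Type u} [TopologicalSpace X] [T35Space X]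
    (s : Set X) (hs : IsOpen s) :
    ∃ V : Set (StoneCech X), IsOpen V ∧ stoneCechUnit ⁻¹' V = s := by
  have key : ∀ x : s, ∃ V : Set (StoneCech X), IsOpen V ∧
      stoneCechUnit x.1 ∈ V ∧ stoneCechUnit ⁻¹' V ⊆ s := by
    rintro ⟨x, hx⟩
    obtain ⟨f, hf, hfx, hfK⟩ := CompletelyRegularSpace.completely_regular x sᶜ
      hs.isClosed_compl (by simpa)
    let g := stoneCechExtend hf
    have hgu : g ∘ stoneCechUnit = f := stoneCechExtend_extends hf
    refine ⟨g ⁻¹' {t : I | (t : ℝ) < 1}, ?_, ?_, ?_⟩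
    · exact (isOpen_Iio.preimage continuous_subtype_val).preimage (continuous_stoneCechExtend hf)
    · show ((g ∘ stoneCechUnit) x : ℝ) < 1
      rw [hgu, hfx]; norm_num
    · intro y hy
      by_contra hys
      have h1 : f y = 1 := hfK hys
      have : ((g ∘ stoneCechUnit) y : ℝ) < 1 := hy
      rw [hgu, h1] at this
      exact lt_irrefl _ this
  choose V hVo hVmem hVsub using key
  refine ⟨⋃ x : s, V x, isOpen_iUnion hVo, ?_⟩
  apply Set.Subset.antisymm
  · rintro y hy
    simp only [Set.mem_preimage, Set.mem_iUnion] at hy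
    obtain ⟨x, hx⟩ := hy
    exact hVsub x hx
  · intro x hx
    exact Set.mem_iUnion.2 ⟨⟨x, hx⟩, hVmem ⟨x, hx⟩⟩

/-- An `ℵ₁`-Čech-complete Tychonoff space is a `G_{ℵ₁}` set in its Stone–Čech
compactification. -/
theorem stmt10 {X : Type u} [TopologicalSpace X] [T35Space X]
    (hC : Aleph1CechComplete X) :
    ∃ U : Om1 → Set (StoneCech X), (∀ i, IsOpen (U i)) ∧
      (⋂ i, U i) = Set.range (stoneCechUnit : X → StoneCech X) := by
  classical
  obtain ⟨U, hcov, hcomp⟩ := hC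
  choose V hVo hVeq using fun s hs => exists_open_preimage_eq (X := X) s hs
  refine ⟨fun i => ⋃ s ∈ U i, ⋃ h : IsOpen s, V s h, ?_, ?_⟩
  · intro i
    exact isOpen_biUnion fun s _ => isOpen_iUnion fun h => hVo s h
  · apply Set.Subset.antisymm
    · -- hard direction: any point of the intersection is in the range
      intro p hp
      set C : Set (Set X) :=
        {c | ∃ W : Set (StoneCech X), IsOpen W ∧ p ∈ W ∧
          c = closure (stoneCechUnit ⁻¹' W)} with hCdef
      have hclosed : ∀ c ∈ C, IsClosed c := by
        rintro c ⟨W, _, _, rfl⟩; exact isClosed_closure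
      have hcent : ∀ F : Finset (Set X), ↑F ⊆ C → (⋂₀ (F : Set (Set X))).Nonempty := by
        intro F hF
        have key : ∀ c : {c // c ∈ (F : Set (Set X))}, ∃ W : Set (StoneCech X),
            IsOpen W ∧ p ∈ W ∧ c.1 = closure (stoneCechUnit ⁻¹' W) :=
          fun c => hF c.2
        choose W hWo hWp hWeq using key
        haveI : Finite {c // c ∈ (F : Set (Set X))} := F.finite_toSet.to_subtype
        have hTo : IsOpen (⋂ c, W c) := isOpen_iInter_of_finite hWo
        have hTne : (⋂ c, W c).Nonempty := ⟨p, Set.mem_iInter.2 hWp⟩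
        obtain ⟨x, hx⟩ := denseRange_stoneCechUnit.exists_mem_open hTo hTne
        refine ⟨x, ?_⟩
        rintro c hc
        rw [show c = closure (stoneCechUnit ⁻¹' W ⟨c, hc⟩) from hWeq ⟨c, hc⟩]
        exact subset_closure (Set.mem_iInter.1 hx ⟨c, hc⟩)
      have hper : ∀ i, ∃ c ∈ C, ∃ s ∈ U i, c ⊆ s := by
        intro i
        have hpi := Set.mem_iInter.1 hp i
        simp only [Set.mem_iUnion] at hpi
        obtain ⟨s, hsU, h, hpV⟩ := hpi
        obtain ⟨t, htn, htc, hts⟩ :=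
          exists_mem_nhds_isClosed_subset ((hVo s h).mem_nhds hpV)
        refine ⟨closure (stoneCechUnit ⁻¹' interior t),
          ⟨interior t, isOpen_interior, mem_interior_iff_mem_nhds.2 htn, rfl⟩, s, hsU, ?_⟩
        calc closure (stoneCechUnit ⁻¹' interior t)
            ⊆ stoneCechUnit ⁻¹' closure (interior t) :=
              continuous_stoneCechUnit.closure_preimage_subset _
          _ ⊆ stoneCechUnit ⁻¹' (V s h) := by
              apply Set.preimage_mono
              exact (closure_minimal interior_subset htc).trans hts
          _ = s := hVeq s h
      obtain ⟨x, hx⟩ := hcomp C hclosed hcent hper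
      refine ⟨x, ?_⟩
      by_contra hne
      obtain ⟨A, B, hA, hB, hpA, hxB, hAB⟩ := t2_separation (Ne.symm hne)
      have hxc : x ∈ closure (stoneCechUnit ⁻¹' A) := hx _ ⟨A, hA, hpA, rfl⟩
      have : stoneCechUnit x ∈ closure A :=
        continuous_stoneCechUnit.closure_preimage_subset A hxc
      have hsub : closure A ⊆ Bᶜ :=
        closure_minimal hAB.subset_compl_right hB.isClosed_compl
      exact hsub this hxB
    · rintro _ ⟨x, rfl⟩
      apply Set.mem_iInter.2
      intro i
      have hx : x ∈ ⋃₀ U i := (hcov i).2.symm ▸ Set.mem_univ x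
      obtain ⟨s, hsU, hxs⟩ := hx
      have hs : IsOpen s := (hcov i).1 s hsU
      simp only [Set.mem_iUnion]
      refine ⟨s, hsU, hs, ?_⟩
      rw [← Set.mem_preimage, hVeq s hs]
      exact hxs
end

section
/- For every open cover U of a regular Lindelöf space X there exists a continuous function f : X → ℝ such that f⁻¹([-n,n]) is included in a union of finitely many elements of U for every n ∈ ω. -/
universe u

/-- For every open cover `U` of a regular Lindelöf space `X` there is a continuous
`f : X → ℝ` with `f⁻¹([-n,n])` included in a finite union of elements of `U` for all `n`. -/
theorem stmt11 {X : Type u} [TopologicalSpace X] [RegularSpace X] [LindelofSpace X]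
    (U : Set (Set X)) (hopen : ∀ s ∈ U, IsOpen s) (hcov : ⋃₀ U = Set.univ) :
    ∃ f : X → ℝ, Continuous f ∧
      ∀ n : ℕ, ∃ t : Finset (Set X), ↑t ⊆ U ∧
        f ⁻¹' (Set.Icc (-(n : ℝ)) (n : ℝ)) ⊆ ⋃₀ (t : Set (Set X)) := by
  rcases isEmpty_or_nonempty X with hX | hX
  · exact ⟨0, continuous_const, fun n => ⟨∅, by simp, fun x _ => (IsEmpty.false x).elim⟩⟩
  -- For each x, pick s x ∈ U containing x, and an open O x with x ∈ O x, closure (O x) ⊆ s x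
  have hchoice : ∀ x : X, ∃ s : Set X, s ∈ U ∧ ∃ O : Set X, IsOpen O ∧ x ∈ O ∧
      closure O ⊆ s := by
    intro x
    have hx : x ∈ ⋃₀ U := hcov ▸ Set.mem_univ x
    rcases hx with ⟨s, hsU, hxs⟩
    rcases exists_mem_nhds_isClosed_subset ((hopen s hsU).mem_nhds hxs) with ⟨c, hc, hcl, hcs⟩
    refine ⟨s, hsU, interior c, isOpen_interior, mem_interior_iff_mem_nhds.2 hc, ?_⟩
    calc closure (interior c) ⊆ closure c := closure_mono interior_subset
    _ = c := hcl.closure_eq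
    _ ⊆ s := hcs
  choose S hSU O hOopen hxO hclO using hchoice
  -- countable subcover
  obtain ⟨r, hrc, hrcov⟩ := isLindelof_univ.elim_countable_subcover O hOopen
    (fun x _ => Set.mem_iUnion.2 ⟨x, hxO x⟩)
  have hrne : r.Nonempty := by
    rcases hX.some with x
    have := hrcov (Set.mem_univ x)
    rcases Set.mem_iUnion₂.1 this with ⟨i, hi, _⟩
    exact ⟨i, hi⟩
  obtain ⟨e, he⟩ := hrc.exists_eq_range hrne
  set o : ℕ → Set X := fun n => O (e n) with ho
  set v : ℕ → Set X := fun n => S (e n) with hv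
  have hvU : ∀ n, v n ∈ U := fun n => hSU (e n)
  have hoopen : ∀ n, IsOpen (o n) := fun n => hOopen (e n)
  have hclov : ∀ n, closure (o n) ⊆ v n := fun n => hclO (e n)
  have hocov : ∀ x : X, ∃ k, x ∈ o k := by
    intro x
    rcases Set.mem_iUnion₂.1 (hrcov (Set.mem_univ x)) with ⟨i, hi, hxi⟩
    rw [he] at hi
    rcases hi with ⟨k, rfl⟩
    exact ⟨k, hxi⟩
  -- W n, C n
  set W : ℕ → Set X := fun n => ⋃ j ∈ Finset.range (n+1), v j with hW
  set C : ℕ → Set X := fun n => ⋃ j ∈ Finset.range (n+1), closure (o j) with hC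
  have hWopen : ∀ n, IsOpen (W n) := fun n =>
    isOpen_biUnion fun j _ => hopen _ (hvU j)
  have hCclosed : ∀ n, IsClosed (C n) := fun n =>
    isClosed_biUnion_finset fun j _ => isClosed_closure
  have hCW : ∀ n, C n ⊆ W n := fun n =>
    Set.iUnion₂_mono fun j _ => hclov j
  have hoC : ∀ k n, k ≤ n → o k ⊆ C n := by
    intro k n hkn x hx
    exact Set.mem_biUnion (Finset.mem_range.2 (Nat.lt_succ_of_le hkn)) (subset_closure hx)
  -- Urysohn functions
  have hury : ∀ n, ∃ h : C(X, ℝ), Set.EqOn h 0 (C n) ∧ Set.EqOn h 1 (W n)ᶜ ∧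
      ∀ x, h x ∈ Set.Icc (0:ℝ) 1 := fun n =>
    exists_continuous_zero_one_of_isClosed (hCclosed n) (hWopen n).isClosed_compl
      (Set.disjoint_compl_right_iff_subset.2 (hCW n))
  choose h h0 h1 h01 using hury
  set f : X → ℝ := fun x => ∑' n, h n x with hf
  have hsupp : ∀ x k, x ∈ o k → ∀ m, m ∉ Finset.range (k+1) → h m x = 0 := by
    intro x k hxk m hm
    have hkm : k ≤ m := not_lt.1 (fun hlt => hm (Finset.mem_range.2 (Nat.lt_succ_of_lt hlt)))
    exact h0 m (hoC k m hkm hxk)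
  have hfeq : ∀ x k, x ∈ o k → f x = ∑ m ∈ Finset.range (k+1), h m x := by
    intro x k hxk
    exact tsum_eq_sum (hsupp x k hxk)
  refine ⟨f, ?_, ?_⟩
  · rw [continuous_iff_continuousAt]
    intro x
    rcases hocov x with ⟨k, hxk⟩
    have hg : ContinuousAt (fun y => ∑ m ∈ Finset.range (k+1), h m y) x :=
      (continuous_finset_sum _ fun m _ => (h m).continuous).continuousAt
    refine hg.congr ?_
    filter_upwards [(hoopen k).mem_nhds hxk] with y hy
    exact (hfeq y k hy).symm
  · intro n
    classical
    refine ⟨(Finset.range (n+1)).image v, ?_, ?_⟩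
    · intro s hs
      simp only [Finset.coe_image, Set.mem_image] at hs
      rcases hs with ⟨j, _, rfl⟩
      exact hvU j
    · intro x hx
      have hxW : x ∈ W n := by
        by_contra hxW
        rcases hocov x with ⟨k, hxk⟩
        have hkn : n < k := by
          by_contra hnk
          push_neg at hnk
          exact hxW (Set.mem_biUnion (Finset.mem_range.2 (Nat.lt_succ_of_le hnk))
            (hclov k (subset_closure hxk)))
        have hone : ∀ j ∈ Finset.range (n+1), h j x = 1 := by
          intro j hj
          have hWj : W j ⊆ W n := Set.biUnion_subset_biUnion_left
            (fun i hi => Finset.mem_range.2 (lt_of_lt_of_le (Finset.mem_range.1 hi)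
              (Nat.succ_le_succ (Nat.le_of_lt_succ (Finset.mem_range.1 hj)))))
          have := h1 j (fun hxWj => hxW (hWj hxWj))
          simpa using this
        have hge : (n:ℝ) + 1 ≤ f x := by
          rw [hfeq x k hxk]
          calc (n:ℝ) + 1 = ∑ j ∈ Finset.range (n+1), h j x := by
                rw [Finset.sum_congr rfl hone]; simp
          _ ≤ ∑ j ∈ Finset.range (k+1), h j x :=
              Finset.sum_le_sum_of_subset_of_nonneg
                (Finset.range_subset_range.2 (Nat.succ_le_succ hkn.le))
                (fun i _ _ => (h01 i x).1)
        have hle : f x ≤ n := hx.2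
        linarith
      rcases Set.mem_iUnion₂.1 hxW with ⟨j, hj, hxj⟩
      exact ⟨v j, by simpa using ⟨j, Nat.le_of_lt_succ (Finset.mem_range.1 hj), rfl⟩, hxj⟩
end

section
/- Every Lindelöf projectively ℵ_1-Hurewicz Tychonoff space is ℵ_1-Hurewicz. -/
set_option maxHeartbeats 1000000

universe u

/-- For a Lindelöf space `X` and an open `W ⊆ βX` containing (the image of) `X`,
there is a continuous `g : βX → [0,1]` vanishing off `W` and positive on `X`. -/
lemma exists_pos_vanishing_off {X : Type u} [TopologicalSpace X] [LindelofSpace X]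
    (W : Set (StoneCech X)) (hW : IsOpen W)
    (hXW : Set.range (stoneCechUnit : X → StoneCech X) ⊆ W) :
    ∃ g : StoneCech X → ℝ, Continuous g ∧ (∀ z, g z ∈ Set.Icc (0:ℝ) 1) ∧
      (∀ z, z ∉ W → g z = 0) ∧ (∀ x : X, 0 < g (stoneCechUnit x)) := by
  cases isEmpty_or_nonempty X with
  | inl h =>
    exact ⟨fun _ => 0, continuous_const, fun z => ⟨le_refl 0, zero_le_one⟩,
      fun _ _ => rfl, fun x => (h.false x).elim⟩
  | inr h =>
    have hV : ∀ x : X, ∃ V : Set (StoneCech X),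
        IsOpen V ∧ stoneCechUnit x ∈ V ∧ closure V ⊆ W := by
      intro x
      obtain ⟨s, hs, hsc, hsW⟩ := exists_mem_nhds_isClosed_subset (hW.mem_nhds (hXW ⟨x, rfl⟩))
      exact ⟨interior s, isOpen_interior, mem_interior_iff_mem_nhds.2 hs,
        (closure_minimal interior_subset hsc).trans hsW⟩
    choose V hVo hVx hVW using hV
    have hLin : IsLindelof (Set.range (stoneCechUnit : X → StoneCech X)) := by
      simpa [Set.image_univ] using
        (isLindelof_univ (X := X)).image continuous_stoneCechUnit
    obtain ⟨t, htc, htsub⟩ := hLin.elim_countable_subcover V hVo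
      (by rintro _ ⟨x, rfl⟩; exact Set.mem_iUnion.2 ⟨x, hVx x⟩)
    obtain ⟨x₀⟩ := h
    obtain ⟨e, he⟩ := (htc.insert x₀).exists_eq_range ⟨x₀, Set.mem_insert _ _⟩
    have hUry : ∀ n : ℕ, ∃ f : C(StoneCech X, ℝ), Set.EqOn f 0 Wᶜ ∧
        Set.EqOn f 1 (closure (V (e n))) ∧ ∀ z, f z ∈ Set.Icc (0:ℝ) 1 := by
      intro n
      refine exists_continuous_zero_one_of_isClosed hW.isClosed_compl isClosed_closure ?_
      exact Set.disjoint_left.2 fun z hz hz' => hz (hVW (e n) hz')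
    choose f h0 h1 hIcc using hUry
    have hunorm : Summable (fun n : ℕ => ((1:ℝ)/2)^(n+1)) := by
      exact (summable_geometric_two.mul_right (1/2)).congr fun n => (pow_succ _ _).symm
    have hterm_nonneg : ∀ (z : StoneCech X) (n : ℕ), 0 ≤ ((1:ℝ)/2)^(n+1) * f n z :=
      fun z n => mul_nonneg (by positivity) (hIcc n z).1
    have hterm_le : ∀ (n : ℕ) (z : StoneCech X),
        ((1:ℝ)/2)^(n+1) * f n z ≤ ((1:ℝ)/2)^(n+1) := by
      intro n z
      have := (hIcc n z).2
      nlinarith [pow_pos (by norm_num : (0:ℝ) < 1/2) (n+1)]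
    have hsummable : ∀ z : StoneCech X, Summable fun n : ℕ => ((1:ℝ)/2)^(n+1) * f n z := by
      intro z
      exact Summable.of_nonneg_of_le (hterm_nonneg z) (fun n => hterm_le n z) hunorm
    refine ⟨fun z => ∑' n : ℕ, ((1:ℝ)/2)^(n+1) * f n z, ?_, ?_, ?_, ?_⟩
    · refine continuous_tsum (fun n => continuous_const.mul (f n).continuous) hunorm ?_
      intro n z
      rw [Real.norm_eq_abs, abs_mul, abs_of_nonneg (by positivity : (0:ℝ) ≤ ((1:ℝ)/2)^(n+1)),
        abs_of_nonneg (hIcc n z).1]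
      exact hterm_le n z
    · intro z
      constructor
      · exact tsum_nonneg (hterm_nonneg z)
      · have h1' : ∑' n : ℕ, ((1:ℝ)/2)^(n+1) = 1 := by
          have := tsum_geometric_two' 1
          simpa [one_div, pow_succ, div_eq_mul_inv, inv_pow, mul_comm] using this
        calc ∑' n : ℕ, ((1:ℝ)/2)^(n+1) * f n z ≤ ∑' n : ℕ, ((1:ℝ)/2)^(n+1) :=
              Summable.tsum_le_tsum (fun n => hterm_le n z) (hsummable z) hunorm
          _ = 1 := h1'
    · intro z hz
      have hz0 : (fun n : ℕ => ((1:ℝ)/2)^(n+1) * f n z) = fun _ => 0 := by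
        funext n
        have : f n z = 0 := h0 n hz
        rw [this, mul_zero]
      show ∑' n : ℕ, ((1:ℝ)/2)^(n+1) * f n z = 0
      rw [hz0, tsum_zero]
    · intro x
      have hx : stoneCechUnit x ∈ ⋃ i ∈ t, V i := htsub ⟨x, rfl⟩
      obtain ⟨i, hit, hxi⟩ := Set.mem_iUnion₂.1 hx
      have : i ∈ Set.range e := he ▸ Set.mem_insert_of_mem _ hit
      obtain ⟨n, rfl⟩ := this
      refine Summable.tsum_pos (hsummable _) (hterm_nonneg _) n ?_
      have h1x : f n (stoneCechUnit x) = 1 := h1 n (subset_closure hxi)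
      rw [h1x, mul_one]
      positivity

/-- Every Lindelöf, projectively `ℵ₁`-Hurewicz Tychonoff space is `ℵ₁`-Hurewicz, where
projectively `ℵ₁`-Hurewicz means every continuous image of `X` in `[0,1]^{ω₁}` is
`ℵ₁`-Hurewicz. -/
theorem stmt12 {X : Type u} [TopologicalSpace X] [LindelofSpace X] [T35Space X]
    (hproj : ∀ f : X → (Om1 → unitInterval), Continuous f →
      Aleph1Hurewicz ↥(Set.range f)) :
    Aleph1Hurewicz X := by
  intro U hU
  -- for each α, get g α : βX → [0,1] vanishing off U α, positive on X
  choose g hgc hgIcc hg0 hgpos using fun α : Om1 =>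
    exists_pos_vanishing_off (U α) (hU α).1 (hU α).2
  -- the map into the Tychonoff cube
  set f : X → (Om1 → unitInterval) := fun x α => ⟨g α (stoneCechUnit x), hgIcc α _⟩ with hf_def
  have hfc : Continuous f := continuous_pi fun α =>
    Continuous.subtype_mk ((hgc α).comp continuous_stoneCechUnit) _
  have hY := hproj f hfc
  set Y := ↥(Set.range f)
  -- maps
  have hvalc : Continuous (Subtype.val : Y → (Om1 → unitInterval)) := continuous_subtype_val
  set p : StoneCech Y → (Om1 → unitInterval) := stoneCechExtend hvalc with hp_def
  have hpc : Continuous p := continuous_stoneCechExtend hvalc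
  set r : X → Y := fun x => ⟨f x, ⟨x, rfl⟩⟩ with hr_def
  have hrc : Continuous r := hfc.subtype_mk _
  have hqc0 : Continuous fun x => stoneCechUnit (r x) := continuous_stoneCechUnit.comp hrc
  set q : StoneCech X → StoneCech Y := stoneCechExtend hqc0 with hq_def
  have hqcont : Continuous q := continuous_stoneCechExtend hqc0
  -- the open sets upstairs
  set U' : Om1 → Set (StoneCech Y) := fun α => {w | 0 < ((p w α : unitInterval) : ℝ)} with hU'_def
  have hU' : ∀ α, IsOpen (U' α) ∧ Set.range (stoneCechUnit : Y → StoneCech Y) ⊆ U' α := by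
    intro α
    constructor
    · exact isOpen_Ioi.preimage (continuous_subtype_val.comp ((continuous_apply α).comp hpc))
    · rintro _ ⟨y, rfl⟩
      have hpy : p (stoneCechUnit y) = y.val := congrFun (stoneCechExtend_extends hvalc) y
      obtain ⟨x, hx⟩ := y.2
      show 0 < ((p (stoneCechUnit y) α : unitInterval) : ℝ)
      rw [hpy, ← hx]
      exact hgpos α x
  obtain ⟨F', hF'closed, hF'cov, hF'sub⟩ := hY U' hU'
  -- key identity: p ∘ q = G
  set G : StoneCech X → (Om1 → unitInterval) := fun z α => ⟨g α z, hgIcc α z⟩ with hG_def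
  have hGc : Continuous G := continuous_pi fun α => Continuous.subtype_mk (hgc α) _
  have hkey : p ∘ q = G := by
    apply stoneCech_hom_ext (hpc.comp hqcont) hGc
    funext x
    have hq : q (stoneCechUnit x) = stoneCechUnit (r x) := congrFun (stoneCechExtend_extends hqc0) x
    have hp : p (stoneCechUnit (r x)) = (r x).val := congrFun (stoneCechExtend_extends hvalc) (r x)
    simp only [Function.comp_apply, hq, hp]
    rfl
  refine ⟨fun α => q ⁻¹' (F' α), fun α => (hF'closed α).preimage hqcont, ?_, ?_⟩
  · rintro _ ⟨x, rfl⟩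
    have hq : q (stoneCechUnit x) = stoneCechUnit (r x) := congrFun (stoneCechExtend_extends hqc0) x
    have : stoneCechUnit (r x) ∈ ⋃ i, F' i := hF'cov ⟨r x, rfl⟩
    obtain ⟨α, hα⟩ := Set.mem_iUnion.1 this
    exact Set.mem_iUnion.2 ⟨α, by simpa [hq] using hα⟩
  · intro z hz
    obtain ⟨α, hα⟩ := Set.mem_iUnion.1 hz
    have hqz : q z ∈ ⋂ i, U' i := hF'sub (Set.mem_iUnion.2 ⟨α, hα⟩)
    refine Set.mem_iInter.2 fun β => ?_
    have hβ : 0 < ((p (q z) β : unitInterval) : ℝ) := Set.mem_iInter.1 hqz β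
    have hpq : p (q z) = G z := congrFun hkey z
    rw [hpq] at hβ
    by_contra hzW
    have : g β z = 0 := hg0 β z hzW
    simp only [hG_def] at hβ
    rw [this] at hβ
    exact lt_irrefl 0 hβ
end

section
/- Lindelöf projectively ℵ_1 Tychonoff spaces are ℵ_1-Hurewicz: if every continuous image of X in [0,1]^{ω_1} has cardinality at most ℵ_1 and X is Lindelöf, then X is ℵ_1-Hurewicz. -/
universe u

open Set in
lemma key {X : Type u} [TopologicalSpace X] [LindelofSpace X]
    (W : Set (StoneCech X)) (hW : IsOpen W)
    (hXW : Set.range (stoneCechUnit : X → StoneCech X) ⊆ W) :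
    ∃ f : StoneCech X → ℝ, Continuous f ∧ (∀ p, f p ∈ Set.Icc (0:ℝ) 1) ∧
      (∀ p ∉ W, f p = 1) ∧ (∀ x : X, f (stoneCechUnit x) < 1) := by
  by_cases hne : Nonempty X
  · -- separating functions
    have hsep : ∀ t : X, ∃ h : C(StoneCech X, ℝ),
        h (stoneCechUnit t) = 0 ∧ (∀ p ∉ W, h p = 1) ∧ ∀ p, h p ∈ Set.Icc (0:ℝ) 1 := by
      intro t
      obtain ⟨h, h0, h1, hbd⟩ := exists_continuous_zero_one_of_isClosed
        (isClosed_singleton (x := stoneCechUnit t)) hW.isClosed_compl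
        (by simp [Set.disjoint_singleton_left, hXW (Set.mem_range_self t)])
      exact ⟨h, h0 rfl, fun p hp => h1 hp, hbd⟩
    choose h h0 h1 hbd using hsep
    -- Lindelöf: countable subcover of the sets {h t < 1/2}
    have hcov : (Set.univ : Set X) ⊆ ⋃ t : X, (fun x => h t (stoneCechUnit x)) ⁻¹' Set.Iio (1/2 : ℝ) := by
      intro x _
      exact Set.mem_iUnion.2 ⟨x, by simp [h0 x]⟩
    obtain ⟨r, hrc, hrcov⟩ := isLindelof_univ.elim_countable_subcover _
      (fun t => ((h t).continuous.comp continuous_stoneCechUnit).isOpen_preimage _ isOpen_Iio) hcov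
    have hrne : r.Nonempty := by
      rcases hne with ⟨x⟩
      rcases Set.mem_iUnion₂.1 (hrcov (Set.mem_univ x)) with ⟨t, ht, _⟩
      exact ⟨t, ht⟩
    obtain ⟨e, he⟩ := hrc.exists_eq_range hrne
    -- the function
    set f : StoneCech X → ℝ := fun p => ∑' n : ℕ, (1/2:ℝ)^(n+1) * h (e n) p with hf
    have hgeo : Summable (fun n : ℕ => (1/2:ℝ)^n) :=
      summable_geometric_of_lt_one (by norm_num) (by norm_num)
    have hsum : Summable (fun n : ℕ => (1/2:ℝ)^(n+1)) :=
      (hgeo.mul_left (1/2:ℝ)).congr (fun n => by ring)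
    have htot : ∑' n : ℕ, (1/2:ℝ)^(n+1) = 1 := by
      have h1 : ∑' n : ℕ, (1/2:ℝ)^(n+1) = ∑' n : ℕ, (1/2:ℝ) * (1/2:ℝ)^n :=
        tsum_congr (fun n => by ring)
      rw [h1, tsum_mul_left, tsum_geometric_of_lt_one (by norm_num) (by norm_num)]
      norm_num
    have hbd' : ∀ (n : ℕ) p, ‖(1/2:ℝ)^(n+1) * h (e n) p‖ ≤ (1/2:ℝ)^(n+1) := by
      intro n p
      rw [Real.norm_eq_abs, abs_mul, abs_of_nonneg (by positivity)]
      have hb := hbd (e n) p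
      have h1' : |(h (e n)) p| ≤ 1 := abs_le.2 ⟨by linarith [hb.1], hb.2⟩
      nlinarith [pow_pos (show (0:ℝ) < 1/2 by norm_num) (n+1)]
    have hcont : Continuous f :=
      continuous_tsum (fun n => continuous_const.mul (h (e n)).continuous) hsum hbd'
    have hle : ∀ p (n : ℕ), (1/2:ℝ)^(n+1) * h (e n) p ≤ (1/2:ℝ)^(n+1) := by
      intro p n
      nlinarith [(hbd (e n) p).2, pow_pos (by norm_num : (0:ℝ) < 1/2) (n+1)]
    have hnn : ∀ p (n : ℕ), 0 ≤ (1/2:ℝ)^(n+1) * h (e n) p := by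
      intro p n; have := (hbd (e n) p).1; positivity
    refine ⟨f, hcont, ?_, ?_, ?_⟩
    · intro p
      constructor
      · exact tsum_nonneg (hnn p)
      · calc f p ≤ ∑' n : ℕ, (1/2:ℝ)^(n+1) := Summable.tsum_le_tsum (hle p) (hsum.of_nonneg_of_le (hnn p) (hle p)) hsum
          _ = 1 := htot
    · intro p hp
      have : f p = ∑' n : ℕ, (1/2:ℝ)^(n+1) := by
        apply tsum_congr; intro n; rw [h1 (e n) p hp, mul_one]
      rw [this, htot]
    · intro x
      rcases Set.mem_iUnion₂.1 (hrcov (Set.mem_univ x)) with ⟨t, ht, hxt⟩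
      rw [he] at ht
      rcases ht with ⟨n, rfl⟩
      have hlt : (1/2:ℝ)^(n+1) * h (e n) (stoneCechUnit x) < (1/2:ℝ)^(n+1) := by
        have : h (e n) (stoneCechUnit x) < 1/2 := hxt
        nlinarith [pow_pos (by norm_num : (0:ℝ) < 1/2) (n+1)]
      calc f (stoneCechUnit x) < ∑' n : ℕ, (1/2:ℝ)^(n+1) :=
            Summable.tsum_lt_tsum_of_nonneg (hnn _) (hle _) hlt hsum
        _ = 1 := htot
  · refine ⟨fun _ => 1, continuous_const, fun p => by norm_num, fun p _ => rfl, fun x => (hne ⟨x⟩).elim⟩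

lemma mk_Om1' : Cardinal.mk {o : Ordinal.{0} // o < (Cardinal.aleph 1).ord} = Cardinal.aleph 1 := by
  have h := Ordinal.mk_Iio_ordinal.{0} (Cardinal.aleph 1).ord
  rw [Cardinal.card_ord] at h
  rw [show Cardinal.mk {o : Ordinal.{0} // o < (Cardinal.aleph 1).ord}
      = Cardinal.mk (Set.Iio (Cardinal.aleph 1).ord) from rfl, h, Cardinal.lift_aleph]
  norm_num

/-- Lindelöf, projectively `ℵ₁` Tychonoff spaces are `ℵ₁`-Hurewicz: if every continuous
image of `X` in `[0,1]^{ω₁}` has cardinality at most `ℵ₁`, then `X` is `ℵ₁`-Hurewicz. -/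
theorem stmt13 {X : Type u} [TopologicalSpace X] [LindelofSpace X] [T35Space X]
    (hproj : ∀ f : X → (Om1 → unitInterval), Continuous f →
      Cardinal.mk (Set.range f) ≤ Cardinal.aleph 1) :
    Aleph1Hurewicz X := by
  intro U hU
  by_cases hne : Nonempty X
  · choose f hfcont hfbd hf1 hflt using fun i => key (U i) (hU i).1 (hU i).2
    set g : X → Om1 → unitInterval := fun x i => ⟨f i (stoneCechUnit x), hfbd i _⟩ with hg
    have hgc : Continuous g := continuous_pi fun i =>
      Continuous.subtype_mk ((hfcont i).comp continuous_stoneCechUnit) _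
    have hY : Cardinal.mk (Set.range g) ≤ Cardinal.mk Om1 := by
      rw [mk_Om1']; exact hproj g hgc
    have hYne : Nonempty (Set.range g) := by
      rcases hne with ⟨x⟩; exact ⟨⟨g x, Set.mem_range_self x⟩⟩
    obtain ⟨ι⟩ := Cardinal.le_def _ _ |>.1 hY
    set e : Om1 → Set.range g := Function.invFun ι with he
    have hsur : ∀ y, e (ι y) = y := Function.leftInverse_invFun ι.injective
    set F : Om1 → Set (StoneCech X) :=
      fun β => ⋂ i, {p | f i p ≤ (((e β : Om1 → unitInterval) i : ℝ))} with hF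
    refine ⟨F, ?_, ?_, ?_⟩
    · intro β
      exact isClosed_iInter fun i => IsClosed.preimage (hfcont i) isClosed_Iic
    · rintro p ⟨x, rfl⟩
      refine Set.mem_iUnion.2 ⟨ι ⟨g x, Set.mem_range_self x⟩, ?_⟩
      refine Set.mem_iInter.2 fun i => ?_
      have : e (ι ⟨g x, Set.mem_range_self x⟩) = ⟨g x, Set.mem_range_self x⟩ := hsur _
      show f i (stoneCechUnit x) ≤ (((e (ι ⟨g x, Set.mem_range_self x⟩) : Om1 → unitInterval) i : ℝ))
      rw [this]
    · rintro p hp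
      rcases Set.mem_iUnion.1 hp with ⟨β, hβ⟩
      refine Set.mem_iInter.2 fun i => ?_
      obtain ⟨x, hx⟩ := (e β).2
      have hlt : (((e β : Om1 → unitInterval) i : ℝ)) < 1 := by
        rw [← hx]; exact hflt i x
      have hle : f i p ≤ (((e β : Om1 → unitInterval) i : ℝ)) := Set.mem_iInter.1 hβ i
      by_contra hpu
      have := hf1 i p hpu
      linarith
  · refine ⟨fun _ => ∅, fun _ => isClosed_empty, ?_, by simp⟩
    rintro p ⟨x, rfl⟩
    exact (hne ⟨x⟩).elim
end

section
/- Assume 2^(ℵ_1) = ℵ_2. Then every ℵ_1-L-productive Tychonoff space is projectively ℵ_1-compact: every continuous image of such a space in [0,1]^{ω_1} is the union of at most ℵ_1 compact sets. -/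
universe u

open Cardinal

/-- The Lindelöf number of `X`: the least cardinal `κ` such that every open cover of `X`
has a subcover of size `≤ κ`. -/
noncomputable def LNum (X : Type u) [TopologicalSpace X] : Cardinal.{u} :=
  sInf {κ | ∀ 𝒰 : Set (Set X), (∀ s ∈ 𝒰, IsOpen s) → ⋃₀ 𝒰 = Set.univ →
    ∃ 𝒱 ⊆ 𝒰, #𝒱 ≤ κ ∧ ⋃₀ 𝒱 = Set.univ}

open Set TopologicalSpace Topology

abbrev KK : Type 1 := Om1 → unitInterval

abbrev W2 : Type 1 := {o : Ordinal.{0} // o < (Cardinal.aleph 2).ord}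

lemma mk_lt_ord (c : Cardinal.{0}) : #{o : Ordinal.{0} // o < c.ord} = Cardinal.lift.{1} c := by
  have h : #{o : Ordinal.{0} // o < c.ord} = #(Set.Iio c.ord) := rfl
  rw [h, Ordinal.mk_Iio_ordinal, Cardinal.card_ord]

lemma mk_Om1 : #Om1 = aleph 1 := by
  rw [mk_lt_ord, lift_aleph]; norm_num

lemma mk_W2 : #W2 = aleph 2 := by
  rw [mk_lt_ord, lift_aleph]; norm_num

instance : Infinite Om1 := by
  rw [Cardinal.infinite_iff, mk_Om1]; exact aleph0_le_aleph 1

instance : Nonempty Om1 := inferInstance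

-- initial segments of W2 are small
lemma mk_Iio_W2 (γ : W2) : #{β : W2 // β < γ} ≤ aleph 1 := by
  have e : {β : W2 // β < γ} ≃ {o : Ordinal.{0} // o < γ.1} :=
    { toFun := fun β => ⟨β.1.1, β.2⟩
      invFun := fun o => ⟨⟨o.1, lt_trans o.2 γ.2⟩, o.2⟩
      left_inv := fun β => rfl
      right_inv := fun o => rfl }
  rw [Cardinal.mk_congr e]
  have h : #{o : Ordinal.{0} // o < γ.1} = Cardinal.lift.{1} γ.1.card := by
    have : #{o : Ordinal.{0} // o < γ.1} = #(Set.Iio γ.1) := rfl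
    rw [this, Ordinal.mk_Iio_ordinal]
  rw [h]
  have hγ : γ.1.card < aleph 2 := (Cardinal.lt_ord).1 γ.2
  have h2 : (aleph 2 : Cardinal.{0}) = Order.succ (aleph 1) := by
    rw [← Cardinal.aleph_succ]; norm_num
  have hγ' : γ.1.card ≤ aleph 1 := Order.lt_succ_iff.mp (lt_of_lt_of_eq hγ h2)
  calc Cardinal.lift.{1} γ.1.card ≤ Cardinal.lift.{1} (aleph 1) := lift_le.2 hγ'
    _ = aleph 1 := by rw [lift_aleph]; norm_num

/-- A topological basis for `KK` of size at most `ℵ₁`. -/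
lemma exists_small_basis : ∃ B : Set (Set KK),
    IsTopologicalBasis B ∧ #B ≤ aleph 1 := by
  set cb : Set (Set unitInterval) := countableBasis unitInterval with hcb
  refine ⟨{ S | ∃ (U : ∀ _ : Om1, Set unitInterval) (F : Finset Om1),
      (∀ i, i ∈ F → U i ∈ cb) ∧ S = (F : Set Om1).pi U },
    isTopologicalBasis_pi (fun _ => isBasis_countableBasis _), ?_⟩
  -- index by pairs (F, g)
  classical
  set I : Type 1 := Σ F : Finset Om1, (∀ i : F, {s // s ∈ cb}) with hI
  have hcov : { S | ∃ (U : ∀ _ : Om1, Set unitInterval) (F : Finset Om1),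
      (∀ i, i ∈ F → U i ∈ cb) ∧ S = (F : Set Om1).pi U } ⊆
      Set.range (fun p : I => (p.1 : Set Om1).pi
        (fun i => if h : i ∈ p.1 then (p.2 ⟨i, h⟩).1 else Set.univ)) := by
    rintro S ⟨U, F, hU, rfl⟩
    refine ⟨⟨F, fun i => ⟨U i.1, hU i.1 i.2⟩⟩, ?_⟩
    ext x
    simp only [Set.mem_pi, Finset.coe_sort_coe, Finset.mem_coe]
    constructor
    · intro h i hi; have := h i hi; rwa [dif_pos hi] at this
    · intro h i hi; rw [dif_pos hi]; exact h i hi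
  have h1 : #(Set.range (fun p : I => (p.1 : Set Om1).pi
        (fun i => if h : i ∈ p.1 then (p.2 ⟨i, h⟩).1 else Set.univ))) ≤ #I :=
    Cardinal.mk_range_le
  have hIcard : #I ≤ aleph 1 := by
    have : #I = Cardinal.sum (fun F : Finset Om1 => #(∀ i : F, {s // s ∈ cb})) :=
      Cardinal.mk_sigma _
    rw [this]
    have hfib : ∀ F : Finset Om1, #(∀ i : F, {s // s ∈ cb}) ≤ ℵ₀ := by
      intro F
      have : Countable (∀ i : F, {s // s ∈ cb}) := by
        have : Countable {s // s ∈ cb} := (countable_countableBasis unitInterval).to_subtype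
        infer_instance
      exact Cardinal.mk_le_aleph0
    calc Cardinal.sum (fun F : Finset Om1 => #(∀ i : F, {s // s ∈ cb}))
        ≤ Cardinal.sum (fun _ : Finset Om1 => ℵ₀) := Cardinal.sum_le_sum _ _ hfib
      _ = #(Finset Om1) * ℵ₀ := by rw [Cardinal.sum_const']
      _ = aleph 1 * ℵ₀ := by rw [Cardinal.mk_finset_of_infinite, mk_Om1]
      _ = aleph 1 := by
          rw [Cardinal.mul_eq_max (aleph0_le_aleph 1) le_rfl]
          exact max_eq_left (aleph0_le_aleph 1)
  exact le_trans (le_trans (Cardinal.mk_le_mk_of_subset hcov) h1) hIcard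

noncomputable def BB : Set (Set KK) := exists_small_basis.choose
lemma BB_basis : IsTopologicalBasis BB := exists_small_basis.choose_spec.1
lemma BB_card : #BB ≤ aleph 1 := exists_small_basis.choose_spec.2

lemma cover_reduce {ι : Type 1} (V : ι → Set KK) (hV : ∀ i, IsOpen (V i)) :
    ∃ J : Set ι, #J ≤ aleph 1 ∧ (⋃ i ∈ J, V i) = ⋃ i, V i := by
  classical
  by_cases hne : Nonempty ι
  · set pick : ↥BB → ι := fun b =>
      if h : ∃ i, (b : Set KK) ⊆ V i then h.choose else hne.some with hpick
    refine ⟨Set.range pick, le_trans Cardinal.mk_range_le BB_card, ?_⟩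
    apply Set.Subset.antisymm
    · exact Set.iUnion₂_subset fun i _ => Set.subset_iUnion V i
    · intro x hx
      obtain ⟨i, hxi⟩ := Set.mem_iUnion.1 hx
      obtain ⟨b, hbB, hxb, hbV⟩ := BB_basis.exists_subset_of_mem_open hxi (hV i)
      have hex : ∃ i', (b : Set KK) ⊆ V i' := ⟨i, hbV⟩
      have : x ∈ V (pick ⟨b, hbB⟩) := by
        have : pick ⟨b, hbB⟩ = hex.choose := by rw [hpick]; exact dif_pos hex
        rw [this]; exact hex.choose_spec hxb
      exact Set.mem_iUnion₂.2 ⟨pick ⟨b, hbB⟩, ⟨⟨b, hbB⟩, rfl⟩, this⟩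
  · refine ⟨∅, by simp, ?_⟩
    have : IsEmpty ι := not_nonempty_iff.1 hne
    rw [Set.biUnion_empty, Set.iUnion_of_empty]

lemma opens_card : #{U : Set KK // IsOpen U} ≤ (2 : Cardinal.{1}) ^ (aleph 1 : Cardinal.{1}) := by
  have hinj : Function.Injective
      (fun U : {U : Set KK // IsOpen U} => {b : ↥BB | (b : Set KK) ⊆ U.1}) := by
    intro U U' h
    simp only at h
    have hb : ∀ b : ↥BB, ((b : Set KK) ⊆ U.1) ↔ ((b : Set KK) ⊆ U'.1) := by
      intro b
      constructor
      · intro hbU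
        have : b ∈ {b : ↥BB | (b : Set KK) ⊆ U'.1} := h ▸ (show b ∈ {b : ↥BB | (b : Set KK) ⊆ U.1} from hbU)
        exact this
      · intro hbU
        have : b ∈ {b : ↥BB | (b : Set KK) ⊆ U.1} := h.symm ▸ (show b ∈ {b : ↥BB | (b : Set KK) ⊆ U'.1} from hbU)
        exact this
    have hfam : {s : Set KK | s ∈ BB ∧ s ⊆ U.1} = {s : Set KK | s ∈ BB ∧ s ⊆ U'.1} := by
      ext s
      constructor
      · rintro ⟨hsB, hsU⟩
        exact ⟨hsB, show (⟨s, hsB⟩ : ↥BB) ∈ {b : ↥BB | (b : Set KK) ⊆ U'.1} from (hb ⟨s, hsB⟩).1 hsU⟩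
      · rintro ⟨hsB, hsU⟩
        exact ⟨hsB, show (⟨s, hsB⟩ : ↥BB) ∈ {b : ↥BB | (b : Set KK) ⊆ U.1} from (hb ⟨s, hsB⟩).2 hsU⟩
    apply Subtype.ext
    rw [BB_basis.open_eq_sUnion' U.2, BB_basis.open_eq_sUnion' U'.2]
    exact congrArg _ hfam
  calc #{U : Set KK // IsOpen U} ≤ #(Set ↥BB) := Cardinal.mk_le_of_injective hinj
    _ = 2 ^ #(↥BB) := Cardinal.mk_set
    _ ≤ (2 : Cardinal.{1}) ^ (aleph 1 : Cardinal.{1}) :=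
        Cardinal.power_le_power_left two_ne_zero BB_card

/-- `G` is an intersection of at most `ℵ₁` open sets. -/
def IsGd (G : Set KK) : Prop :=
  ∃ V : Om1 → Set KK, (∀ i, IsOpen (V i)) ∧ G = ⋂ i, V i

lemma surj_of_mk_le {α β : Type 1} [Nonempty α] (h : #α ≤ #β) :
    ∃ g : β → α, Function.Surjective g := by
  obtain ⟨f⟩ := (Cardinal.le_def _ _).1 h
  exact ⟨Function.invFun f, Function.invFun_surjective f.injective⟩

lemma isGd_open {U : Set KK} (h : IsOpen U) : IsGd U :=
  ⟨fun _ => U, fun _ => h, (Set.iInter_const U).symm⟩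

lemma isGd_iInter {ι : Type 1} (hι : #ι ≤ aleph 1) (G : ι → Set KK)
    (h : ∀ i, IsGd (G i)) : IsGd (⋂ i, G i) := by
  classical
  choose V hVo hVe using h
  by_cases hne : Nonempty ι
  · have hmk : #(ι × Om1) ≤ #Om1 := by
      rw [Cardinal.mk_prod, Cardinal.lift_id, Cardinal.lift_id, mk_Om1]
      calc #ι * aleph 1 ≤ aleph 1 * aleph 1 :=
            mul_le_mul_left hι _
        _ = aleph 1 := Cardinal.mul_eq_self (aleph0_le_aleph 1)
    obtain ⟨s, hs⟩ := surj_of_mk_le (α := ι × Om1) (β := Om1) hmk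
    refine ⟨fun j => V (s j).1 (s j).2, fun j => hVo _ _, ?_⟩
    have h1 : ⋂ j, V (s j).1 (s j).2 = ⋂ p : ι × Om1, V p.1 p.2 :=
      hs.iInter_comp (fun p => V p.1 p.2)
    rw [h1]
    ext x
    constructor
    · intro hxmem
      apply Set.mem_iInter.2
      rintro ⟨i, k⟩
      have hgi := Set.mem_iInter.1 hxmem i
      rw [hVe i] at hgi
      exact Set.mem_iInter.1 hgi k
    · intro hxmem
      apply Set.mem_iInter.2
      intro i
      rw [hVe i]
      apply Set.mem_iInter.2
      intro k
      exact Set.mem_iInter.1 hxmem (i, k)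
  · have : IsEmpty ι := not_nonempty_iff.1 hne
    rw [Set.iInter_of_empty]
    exact isGd_open isOpen_univ

lemma isGd_singleton (x : KK) : IsGd {x} := by
  classical
  set Bx := {b : ↥BB // x ∈ (b : Set KK)} with hBx
  have hne : Nonempty Bx := by
    obtain ⟨b, hbB, hxb, -⟩ :=
      BB_basis.exists_subset_of_mem_open (Set.mem_univ x) isOpen_univ
    exact ⟨⟨⟨b, hbB⟩, hxb⟩⟩
  have hcard : #Bx ≤ #Om1 := by
    rw [mk_Om1]
    exact le_trans (Cardinal.mk_le_of_injective (Subtype.coe_injective)) BB_card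
  obtain ⟨s, hs⟩ := surj_of_mk_le (α := Bx) (β := Om1) hcard
  refine ⟨fun j => ((s j).1 : Set KK), fun j => BB_basis.isOpen (s j).1.2, ?_⟩
  apply Set.Subset.antisymm
  · exact Set.singleton_subset_iff.2 (Set.mem_iInter.2 fun j => (s j).2)
  · intro y hy
    rw [Set.mem_singleton_iff]
    by_contra hne'
    have hU : IsOpen ({y}ᶜ : Set KK) := isOpen_compl_singleton
    have hxU : x ∈ ({y}ᶜ : Set KK) := by simp [Ne.symm hne']
    obtain ⟨b, hbB, hxb, hbU⟩ := BB_basis.exists_subset_of_mem_open hxU hU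
    obtain ⟨j, hj⟩ := hs ⟨⟨b, hbB⟩, hxb⟩
    have hyb : y ∈ ((s j).1 : Set KK) := Set.mem_iInter.1 hy j
    rw [hj] at hyb
    exact (hbU hyb) rfl

lemma exists_seq {Wt : Type 1} {Kt : Type 1} [Nonempty Kt] [LinearOrder Wt] [WellFoundedLT Wt]
    (P : Wt → (Wt → Kt) → Kt → Prop)
    (hmono : ∀ (α : Wt) (g g' : Wt → Kt) (x : Kt),
      (∀ β, β < α → g β = g' β) → P α g x → P α g' x)
    (hex : ∀ (α : Wt) (g : Wt → Kt), (∀ β, β < α → P β g (g β)) → ∃ x, P α g x) :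
    ∃ z : Wt → Kt, ∀ α, P α z (z α) := by
  classical
  have wf : WellFounded ((· < ·) : Wt → Wt → Prop) := IsWellFounded.wf
  set exd : ∀ α : Wt, (∀ β, β < α → Kt) → (Wt → Kt) := fun α ih β =>
    if h : β < α then ih β h else Classical.arbitrary Kt with hexd
  set z : Wt → Kt :=
    wf.fix (fun α ih => Classical.epsilon (fun x => P α (exd α ih) x)) with hzdef
  have hzeq : ∀ α, z α = Classical.epsilon (fun x => P α (exd α (fun β _ => z β)) x) :=
    fun α => wf.fix_eq _ α
  have key : ∀ α, P α z (z α) := by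
    intro α
    refine wf.induction (C := fun α => P α z (z α)) α ?_
    intro α ih
    have hg : ∀ β, β < α → (exd α (fun β _ => z β)) β = z β := by
      intro β hβ
      show (if h : β < α then z β else Classical.arbitrary Kt) = z β
      exact dif_pos hβ
    have hPsame : ∀ β, β < α →
        P β (exd α (fun β _ => z β)) ((exd α (fun β _ => z β)) β) := by
      intro β hβ
      rw [hg β hβ]
      exact hmono β z _ (z β) (fun γ hγ => (hg γ (lt_trans hγ hβ)).symm) (ih β hβ)
    have heps : ∃ x, P α (exd α (fun β _ => z β)) x := hex α _ hPsame
    have hPz : P α (exd α (fun β _ => z β)) (z α) := by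
      rw [hzeq α]; exact Classical.epsilon_spec heps
    exact hmono α _ z (z α) (fun β hβ => hg β hβ) hPz
  exact ⟨z, key⟩

lemma LNum_le {Xt : Type 1} [TopologicalSpace Xt] {κ : Cardinal.{1}}
    (h : ∀ 𝒰 : Set (Set Xt), (∀ s ∈ 𝒰, IsOpen s) → ⋃₀ 𝒰 = Set.univ →
      ∃ 𝒱 ⊆ 𝒰, #𝒱 ≤ κ ∧ ⋃₀ 𝒱 = Set.univ) : LNum Xt ≤ κ :=
  csInf_le' h

lemma LNum_spec (Xt : Type 1) [TopologicalSpace Xt] :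
    ∀ 𝒰 : Set (Set Xt), (∀ s ∈ 𝒰, IsOpen s) → ⋃₀ 𝒰 = Set.univ →
      ∃ 𝒱 ⊆ 𝒰, #𝒱 ≤ LNum Xt ∧ ⋃₀ 𝒱 = Set.univ := by
  have hne : {κ : Cardinal.{1} | ∀ 𝒰 : Set (Set Xt), (∀ s ∈ 𝒰, IsOpen s) →
      ⋃₀ 𝒰 = Set.univ → ∃ 𝒱 ⊆ 𝒰, #𝒱 ≤ κ ∧ ⋃₀ 𝒱 = Set.univ}.Nonempty := by
    exact ⟨#(Set Xt), fun 𝒰 _ hcov => ⟨𝒰, subset_rfl, Cardinal.mk_set_le _, hcov⟩⟩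
  exact csInf_mem hne

section Yspace
variable (CS SS : Set KK)

def genY : Set (Set ↥(CS ∪ SS)) :=
  {U | ∃ V : Set KK, IsOpen V ∧ U = Subtype.val ⁻¹' V} ∪
  {U | ∃ y : ↥(CS ∪ SS), (y : KK) ∈ SS ∧ U = {y}}

def tY : TopologicalSpace ↥(CS ∪ SS) := generateFrom (genY CS SS)

lemma tY_isOpen_singleton {y : ↥(CS ∪ SS)} (hy : (y : KK) ∈ SS) :
    IsOpen[tY CS SS] {y} :=
  TopologicalSpace.GenerateOpen.basic _ (Or.inr ⟨y, hy, rfl⟩)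

lemma tY_isOpen_preimage {V : Set KK} (hV : IsOpen V) :
    IsOpen[tY CS SS] (Subtype.val ⁻¹' V) :=
  TopologicalSpace.GenerateOpen.basic _ (Or.inl ⟨V, hV, rfl⟩)

lemma tY_nbhd (hdisj : ∀ x ∈ CS, x ∉ SS) {U : Set ↥(CS ∪ SS)}
    (hU : IsOpen[tY CS SS] U) :
    ∀ y : ↥(CS ∪ SS), y ∈ U → (y : KK) ∈ CS →
      ∃ V : Set KK, IsOpen V ∧ (y : KK) ∈ V ∧ Subtype.val ⁻¹' V ⊆ U := by
  have hU' : TopologicalSpace.GenerateOpen (genY CS SS) U := hU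
  clear hU
  induction hU' with
  | @basic U hUg =>
    intro y hyU hyC
    rcases hUg with ⟨V, hV, rfl⟩ | ⟨y', hy', rfl⟩
    · exact ⟨V, hV, hyU, subset_rfl⟩
    · rw [Set.mem_singleton_iff] at hyU
      subst hyU
      exact absurd hy' (hdisj _ hyC)
  | univ => exact fun y _ _ => ⟨Set.univ, isOpen_univ, trivial, Set.subset_univ _⟩
  | inter U₁ U₂ h₁ h₂ ih₁ ih₂ =>
    intro y hyU hyC
    obtain ⟨V₁, hV₁, hyV₁, hsub₁⟩ := ih₁ y hyU.1 hyC
    obtain ⟨V₂, hV₂, hyV₂, hsub₂⟩ := ih₂ y hyU.2 hyC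
    exact ⟨V₁ ∩ V₂, hV₁.inter hV₂, ⟨hyV₁, hyV₂⟩,
      fun p hp => ⟨hsub₁ hp.1, hsub₂ hp.2⟩⟩
  | sUnion S hS ih =>
    intro y hyU hyC
    obtain ⟨t, htS, hyt⟩ := hyU
    obtain ⟨V, hV, hyV, hsub⟩ := ih t htS y hyt hyC
    exact ⟨V, hV, hyV, fun p hp => ⟨t, htS, hsub hp⟩⟩

end Yspace


/-- Assuming `2^{ℵ₁} = ℵ₂`, every `ℵ₁`-L-productive Tychonoff space is projectively
`ℵ₁`-compact: every continuous image of `X` in `[0,1]^{ω₁}` is a union of at most `ℵ₁`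
compact sets. -/
theorem stmt14 {X : Type 1} [TopologicalSpace X] [T35Space X]
    (hch : (2 : Cardinal.{1}) ^ aleph 1 = aleph 2)
    (hLprod : ∀ (Y : Type 1) (_ : TopologicalSpace Y),
      LNum Y ≤ aleph 1 → LNum (X × Y) ≤ aleph 1)
    (f : X → (Om1 → unitInterval)) (hf : Continuous f) :
    ∃ K : Om1 → Set (Om1 → unitInterval),
      (∀ i, IsCompact (K i)) ∧ (⋃ i, K i) = Set.range f := by
  classical
  set Kc : Set KK := (Set.range f)ᶜ with hKcdef
  by_cases hGd : IsGd Kc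
  · obtain ⟨V, hVo, hVe⟩ := hGd
    refine ⟨fun i => (V i)ᶜ, fun i => ((hVo i).isClosed_compl).isCompact, ?_⟩
    rw [← Set.compl_iInter, ← hVe, compl_compl]
  · exfalso
    set GC : Set (Set KK) := {G | IsGd G ∧ Kc ⊆ G} with hGCdef
    have hGCcard : #GC ≤ aleph 2 := by
      have hsub : GC ⊆ Set.range
          (fun Vo : Om1 → {U : Set KK // IsOpen U} => ⋂ i, (Vo i).1) := by
        rintro G ⟨⟨V, hVo, hVe⟩, -⟩
        exact ⟨fun i => ⟨V i, hVo i⟩, hVe.symm⟩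
      calc #GC ≤ #(Set.range
            (fun Vo : Om1 → {U : Set KK // IsOpen U} => ⋂ i, (Vo i).1)) :=
            Cardinal.mk_le_mk_of_subset hsub
        _ ≤ #(Om1 → {U : Set KK // IsOpen U}) := Cardinal.mk_range_le
        _ = #{U : Set KK // IsOpen U} ^ #Om1 := (Cardinal.power_def _ _).symm
        _ ≤ ((2 : Cardinal.{1}) ^ (aleph 1 : Cardinal.{1})) ^ #Om1 :=
            Cardinal.power_le_power_right opens_card
        _ = ((2 : Cardinal.{1}) ^ (aleph 1 : Cardinal.{1})) ^ (aleph 1 : Cardinal.{1}) := by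
            rw [mk_Om1]
        _ = (2 : Cardinal.{1}) ^ ((aleph 1 : Cardinal.{1}) * aleph 1) := Cardinal.power_mul.symm
        _ = (2 : Cardinal.{1}) ^ (aleph 1 : Cardinal.{1}) := by
            rw [Cardinal.mul_eq_self (aleph0_le_aleph 1)]
        _ = aleph 2 := hch
    have hGCuniv : (Set.univ : Set KK) ∈ GC := ⟨isGd_open isOpen_univ, Set.subset_univ _⟩
    haveI : Nonempty ↥GC := ⟨⟨_, hGCuniv⟩⟩
    obtain ⟨e, he⟩ := surj_of_mk_le (α := ↥GC) (β := W2) (by rw [mk_W2]; exact hGCcard)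
    have heGC : ∀ w : W2, IsGd ((e w : Set KK)) ∧ Kc ⊆ (e w : Set KK) := fun w => (e w).2
    -- transfinite construction of the concentrated set
    set P : W2 → (W2 → KK) → KK → Prop := fun α g x =>
      (∀ β, β < α → x ∈ (e β : Set KK)) ∧ x ∉ Kc ∧ (∀ β, β < α → x ≠ g β) with hPdef
    have hmono : ∀ (α : W2) (g g' : W2 → KK) (x : KK),
        (∀ β, β < α → g β = g' β) → P α g x → P α g' x := by
      rintro α g g' x hgg ⟨h1, h2, h3⟩
      exact ⟨h1, h2, fun β hβ => (hgg β hβ) ▸ h3 β hβ⟩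
    have hex : ∀ (α : W2) (g : W2 → KK), (∀ β, β < α → P β g (g β)) → ∃ x, P α g x := by
      intro α g hIH
      set T : Set KK := (⋂ b : {β : W2 // β < α}, (e b.1 : Set KK)) ∩
        (⋂ b : {β : W2 // β < α}, ({g b.1}ᶜ : Set KK)) with hTdef
      have hKcT : Kc ⊆ T := by
        intro c hc
        refine ⟨Set.mem_iInter.2 fun b => (heGC b.1).2 hc, Set.mem_iInter.2 fun b => ?_⟩
        intro hceq
        rw [Set.mem_singleton_iff] at hceq
        exact (hIH b.1 b.2).2.1 (hceq ▸ hc)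
      by_cases hTK : ∃ x ∈ T, x ∉ Kc
      · obtain ⟨x, hxT, hxK⟩ := hTK
        refine ⟨x, fun β hβ => Set.mem_iInter.1 hxT.1 ⟨β, hβ⟩, hxK, fun β hβ hxg => ?_⟩
        exact (Set.mem_iInter.1 hxT.2 ⟨β, hβ⟩) (Set.mem_singleton_iff.2 hxg)
      · exfalso
        push_neg at hTK
        have hTeq : T = Kc := Set.Subset.antisymm hTK hKcT
        apply hGd
        rw [← hTeq, hTdef]
        have hidx : #({β : W2 // β < α} ⊕ {β : W2 // β < α}) ≤ aleph 1 := by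
          simp only [Cardinal.mk_sum, Cardinal.lift_id]
          calc #{β : W2 // β < α} + #{β : W2 // β < α} ≤ aleph 1 + aleph 1 :=
              add_le_add (mk_Iio_W2 α) (mk_Iio_W2 α)
            _ = aleph 1 := Cardinal.add_eq_self (aleph0_le_aleph 1)
        have hGdInt := isGd_iInter hidx
          (Sum.elim (fun b : {β : W2 // β < α} => (e b.1 : Set KK))
            (fun b : {β : W2 // β < α} => ({g b.1}ᶜ : Set KK)))
          (by rintro (b | b)
              · exact (heGC b.1).1
              · exact isGd_open isOpen_compl_singleton)
        rwa [Set.iInter_sum] at hGdInt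
    obtain ⟨z, hz⟩ := exists_seq P hmono hex
    have hzC : ∀ α, z α ∉ Kc := fun α => (hz α).2.1
    have hzG : ∀ α β, β < α → z α ∈ (e β : Set KK) := fun α β hβ => (hz α).1 β hβ
    have hzne : ∀ α β, β < α → z α ≠ z β := fun α β hβ => (hz α).2.2 β hβ
    have zinj : Function.Injective z := by
      intro a b hab
      by_contra hne
      rcases lt_or_gt_of_ne hne with h | h
      · exact hzne b a h hab.symm
      · exact hzne a b h hab
    have hzrange : ∀ α, ∃ x, f x = z α := fun α => not_not.1 (hzC α)
    -- concentration
    have hconc : ∀ G : Set KK, IsGd G → Kc ⊆ G → #↥(Set.range z \ G) ≤ aleph 1 := by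
      intro G h1 h2
      obtain ⟨γ, hγ⟩ := he ⟨G, h1, h2⟩
      have hγG : (e γ : Set KK) = G := congrArg Subtype.val hγ
      have hlim : Order.IsSuccLimit ((aleph 2 : Cardinal.{0}).ord) := Cardinal.isSuccLimit_ord (aleph0_le_aleph 2)
      set γ' : W2 := ⟨Order.succ γ.1, hlim.succ_lt γ.2⟩ with hγ'def
      have hsub : Set.range z \ G ⊆ z '' {β : W2 | β < γ'} := by
        rintro x ⟨⟨α, rfl⟩, hxG⟩
        refine ⟨α, ?_, rfl⟩
        show α < γ'
        by_contra hlt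
        have hγα : γ < α := by
          have hle : γ' ≤ α := not_lt.1 hlt
          have h1' : γ < γ' := by
            show γ.1 < Order.succ γ.1
            exact Order.lt_succ γ.1
          exact lt_of_lt_of_le h1' hle
        exact hxG (hγG ▸ hzG α γ hγα)
      calc #↥(Set.range z \ G) ≤ #↥(z '' {β : W2 | β < γ'}) :=
            Cardinal.mk_le_mk_of_subset hsub
        _ ≤ #↥{β : W2 | β < γ'} := Cardinal.mk_image_le
        _ ≤ aleph 1 := mk_Iio_W2 γ'
    -- the space Y
    set SS : Set KK := Set.range z with hSSdef
    letI tYi : TopologicalSpace ↥(Kc ∪ SS) := tY Kc SS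
    have hdisj : ∀ x ∈ Kc, x ∉ SS := by
      rintro x hx ⟨α, rfl⟩
      exact hzC α hx
    have hLY : LNum ↥(Kc ∪ SS) ≤ aleph 1 := by
      apply LNum_le
      intro 𝒰 hop hcov
      have hCpt : ∀ y : {y : ↥(Kc ∪ SS) // (y : KK) ∈ Kc}, ∃ U ∈ 𝒰, y.1 ∈ U := by
        intro y
        have : y.1 ∈ ⋃₀ 𝒰 := hcov ▸ Set.mem_univ _
        obtain ⟨U, hU, hyU⟩ := this
        exact ⟨U, hU, hyU⟩
      choose U hUmem hUy using hCpt
      have hVex : ∀ y : {y : ↥(Kc ∪ SS) // (y : KK) ∈ Kc},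
          ∃ V : Set KK, IsOpen V ∧ (y.1 : KK) ∈ V ∧ Subtype.val ⁻¹' V ⊆ U y :=
        fun y => tY_nbhd Kc SS hdisj (hop _ (hUmem y)) y.1 (hUy y) y.2
      choose V hVo hVy hVsub using hVex
      obtain ⟨J, hJcard, hJun⟩ := cover_reduce V hVo
      set Wo : Set KK := ⋃ y ∈ J, V y with hWodef
      have hWoOpen : IsOpen Wo := isOpen_biUnion fun y _ => hVo y
      have hKcWo : Kc ⊆ Wo := by
        intro c hc
        have hmem : c ∈ ⋃ y, V y := Set.mem_iUnion.2 ⟨⟨⟨c, Or.inl hc⟩, hc⟩, hVy _⟩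
        show c ∈ Wo
        rw [hJun]
        exact hmem
      have hsmall := hconc Wo (isGd_open hWoOpen) hKcWo
      have hSpt : ∀ s : {y : ↥(Kc ∪ SS) // (y : KK) ∈ SS \ Wo}, ∃ U ∈ 𝒰, s.1 ∈ U := by
        intro s
        have : s.1 ∈ ⋃₀ 𝒰 := hcov ▸ Set.mem_univ _
        obtain ⟨U, hU, hsU⟩ := this
        exact ⟨U, hU, hsU⟩
      choose U' hU'mem hU'y using hSpt
      set g : ↥J ⊕ {y : ↥(Kc ∪ SS) // (y : KK) ∈ SS \ Wo} → Set ↥(Kc ∪ SS) :=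
        Sum.elim (fun j => U j.1) U' with hgdef
      refine ⟨Set.range g, ?_, ?_, ?_⟩
      · rintro A ⟨(j | s), rfl⟩
        · exact hUmem j.1
        · exact hU'mem s
      · have hS2 : #{y : ↥(Kc ∪ SS) // (y : KK) ∈ SS \ Wo} ≤ aleph 1 := by
          have hinj2 : Function.Injective
              (fun s : {y : ↥(Kc ∪ SS) // (y : KK) ∈ SS \ Wo} =>
                (⟨(s.1 : KK), s.2⟩ : ↥(SS \ Wo))) := by
            intro s₁ s₂ h12
            have h13 : ((⟨(s₁.1 : KK), s₁.2⟩ : ↥(SS \ Wo))) = ⟨(s₂.1 : KK), s₂.2⟩ := h12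
            exact Subtype.ext (Subtype.ext (congrArg (Subtype.val : ↥(SS \ Wo) → KK) h13))
          exact le_trans (Cardinal.mk_le_of_injective hinj2) hsmall
        calc #(Set.range g) ≤ #(↥J ⊕ {y : ↥(Kc ∪ SS) // (y : KK) ∈ SS \ Wo}) :=
              Cardinal.mk_range_le
          _ = #↥J + #{y : ↥(Kc ∪ SS) // (y : KK) ∈ SS \ Wo} := by
              simp only [Cardinal.mk_sum, Cardinal.lift_id]
          _ ≤ aleph 1 + aleph 1 := add_le_add hJcard hS2
          _ = aleph 1 := Cardinal.add_eq_self (aleph0_le_aleph 1)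
      · apply Set.eq_univ_of_forall
        intro p
        by_cases hpW : (p : KK) ∈ Wo
        · rw [hWodef] at hpW
          obtain ⟨y, hyJ, hpy⟩ := Set.mem_iUnion₂.1 hpW
          exact ⟨U y, ⟨Sum.inl ⟨y, hyJ⟩, rfl⟩, hVsub y hpy⟩
        · have hpS : (p : KK) ∈ SS \ Wo := by
            rcases p.2 with hc | hs
            · exact absurd (hKcWo hc) hpW
            · exact ⟨hs, hpW⟩
          exact ⟨U' ⟨p, hpS⟩, ⟨Sum.inr ⟨p, hpS⟩, rfl⟩, hU'y ⟨p, hpS⟩⟩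
    have hLXY := hLprod ↥(Kc ∪ SS) tYi hLY
    -- a bad cover of X × Y
    choose xz hxz using hzrange
    set yz : W2 → ↥(Kc ∪ SS) := fun α => ⟨z α, Or.inr ⟨α, rfl⟩⟩ with hyzdef
    have yzinj : Function.Injective yz := fun a b hab => zinj (congrArg Subtype.val hab)
    set 𝒰 : Set (Set (X × ↥(Kc ∪ SS))) :=
      {A | (∃ α, A = Set.univ ×ˢ ({yz α} : Set ↥(Kc ∪ SS))) ∨
        (∃ V Wo : Set KK, IsOpen V ∧ IsOpen Wo ∧ Disjoint V Wo ∧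
          A = (f ⁻¹' V) ×ˢ (Subtype.val ⁻¹' Wo))} with h𝒰def
    have hop : ∀ A ∈ 𝒰, IsOpen A := by
      rintro A (⟨α, rfl⟩ | ⟨V, Wo, hV, hWo, hd, rfl⟩)
      · exact isOpen_univ.prod (tY_isOpen_singleton Kc SS ⟨α, rfl⟩)
      · exact (hV.preimage hf).prod (tY_isOpen_preimage Kc SS hWo)
    have hcov : ⋃₀ 𝒰 = Set.univ := by
      apply Set.eq_univ_of_forall
      rintro ⟨x, p⟩
      by_cases hpS : (p : KK) ∈ SS
      · obtain ⟨α, hα⟩ := hpS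
        exact ⟨Set.univ ×ˢ ({yz α} : Set ↥(Kc ∪ SS)), Or.inl ⟨α, rfl⟩,
          Set.mem_univ x, Set.mem_singleton_iff.2 (Subtype.ext hα.symm)⟩
      · have hpK : (p : KK) ∈ Kc := by
          rcases p.2 with hc | hs
          · exact hc
          · exact absurd hs hpS
        have hne : f x ≠ (p : KK) := fun h => hpK ⟨x, h⟩
        obtain ⟨V, Wo, hV, hWo, hfx, hpWo, hd⟩ := t2_separation hne
        exact ⟨(f ⁻¹' V) ×ˢ (Subtype.val ⁻¹' Wo), Or.inr ⟨V, Wo, hV, hWo, hd, rfl⟩,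
          hfx, hpWo⟩
    obtain ⟨𝒱, h𝒱sub, h𝒱card, h𝒱cov⟩ := LNum_spec (X × ↥(Kc ∪ SS)) 𝒰 hop hcov
    have h𝒱le : #𝒱 ≤ aleph 1 := le_trans h𝒱card hLXY
    have hq : ∀ α : W2, ∃ M ∈ 𝒱, ((xz α, yz α) : X × ↥(Kc ∪ SS)) ∈ M := by
      intro α
      have : ((xz α, yz α) : X × ↥(Kc ∪ SS)) ∈ ⋃₀ 𝒱 := h𝒱cov ▸ Set.mem_univ _
      obtain ⟨M, hM, hmem⟩ := this
      exact ⟨M, hM, hmem⟩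
    choose M hMmem hMq using hq
    have hform : ∀ α, M α = Set.univ ×ˢ ({yz α} : Set ↥(Kc ∪ SS)) := by
      intro α
      have hM𝒰 : M α ∈ 𝒰 := h𝒱sub (hMmem α)
      rcases hM𝒰 with ⟨β, hβ⟩ | ⟨V, Wo, hV, hWo, hd, hA⟩
      · have hmemα := hMq α
        rw [hβ] at hmemα
        have heq : yz α = yz β := Set.mem_singleton_iff.1 hmemα.2
        rw [hβ, ← heq]
      · exfalso
        have hmemα := hMq α
        rw [hA] at hmemα
        have h1 : f (xz α) ∈ V := hmemα.1
        have h2 : z α ∈ Wo := hmemα.2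
        rw [hxz α] at h1
        exact Set.disjoint_left.1 hd h1 h2
    have Minj : Function.Injective (fun α : W2 => (⟨M α, hMmem α⟩ : ↥𝒱)) := by
      intro a b hab
      have hMeq : M a = M b := congrArg Subtype.val hab
      have hmem : ((xz a, yz a) : X × ↥(Kc ∪ SS)) ∈
          Set.univ ×ˢ ({yz b} : Set ↥(Kc ∪ SS)) := by
        rw [← hform b, ← hMeq]
        exact hMq a
      exact yzinj (Set.mem_singleton_iff.1 hmem.2)
    have hW2le : aleph 2 ≤ #𝒱 := by
      rw [← mk_W2]
      exact Cardinal.mk_le_of_injective Minj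
    have h12 : (aleph 2 : Cardinal.{1}) ≤ aleph 1 := le_trans hW2le h𝒱le
    have h21 : (2 : Ordinal.{1}) ≤ 1 := Cardinal.aleph_le_aleph.1 h12
    norm_num at h21
end

section
/- Suppose X is a topological space such that X is projectively countable, X² is Lindelöf, and every continuous metrizable image of X² is zero-dimensional. Then X² is projectively countable. -/
universe u

/-- `X` is projectively countable: every continuous image in a separable metrizable space
is countable. -/
def ProjectivelyCountable (X : Type u) [TopologicalSpace X] : Prop :=
  ∀ (Y : Type u) (_ : TopologicalSpace Y), TopologicalSpace.SeparableSpace Y →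
    TopologicalSpace.MetrizableSpace Y →
    ∀ f : X → Y, Continuous f → (Set.range f).Countable

/-- From a (possibly large) basis of open sets in a second countable T1 space, one can
extract a countable subfamily which separates points. -/
lemma exists_countable_separating19 {Z : Type*} [TopologicalSpace Z]
    [SecondCountableTopology Z] [T1Space Z]
    (B : Set (Set Z)) (hBo : ∀ s ∈ B, IsOpen s)
    (hB : TopologicalSpace.IsTopologicalBasis B) :
    ∃ C ⊆ B, C.Countable ∧ ∀ z z' : Z, z ≠ z' → ∃ s ∈ C, z ∈ s ∧ z' ∉ s := by
  classical
  obtain ⟨G, hGc, -, hGb⟩ := TopologicalSpace.exists_countable_basis Z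
  let Φ : Set Z × Set Z → Set (Set Z) := fun p =>
    if h : ∃ b ∈ B, p.1 ⊆ b ∧ b ⊆ p.2 then {h.choose} else ∅
  refine ⟨⋃ p ∈ G ×ˢ G, Φ p, ?_, ?_, ?_⟩
  · rintro s hs
    simp only [Set.mem_iUnion] at hs
    obtain ⟨p, -, hp⟩ := hs
    by_cases h : ∃ b ∈ B, p.1 ⊆ b ∧ b ⊆ p.2
    · simp only [Φ, dif_pos h, Set.mem_singleton_iff] at hp
      subst hp
      exact h.choose_spec.1
    · simp [Φ, dif_neg h] at hp
  · refine Set.Countable.biUnion (hGc.prod hGc) fun p _ => ?_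
    by_cases h : ∃ b ∈ B, p.1 ⊆ b ∧ b ⊆ p.2
    · simp only [Φ, dif_pos h]
      exact Set.countable_singleton _
    · simp only [Φ, dif_neg h]
      exact Set.countable_empty
  · intro z z' hzz
    have hopen : IsOpen ({z'}ᶜ : Set Z) := isOpen_compl_singleton
    have hz : z ∈ ({z'}ᶜ : Set Z) := by simpa using hzz
    obtain ⟨g₂, hg₂G, hzg₂, hg₂sub⟩ := hGb.exists_subset_of_mem_open hz hopen
    obtain ⟨b, hbB, hzb, hbsub⟩ := hB.exists_subset_of_mem_open hzg₂ (hGb.isOpen hg₂G)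
    obtain ⟨g₁, hg₁G, hzg₁, hg₁sub⟩ := hGb.exists_subset_of_mem_open hzb (hBo b hbB)
    have h : ∃ b' ∈ B, g₁ ⊆ b' ∧ b' ⊆ g₂ := ⟨b, hbB, hg₁sub, hbsub⟩
    refine ⟨h.choose, ?_, ?_, ?_⟩
    · refine Set.mem_biUnion (Set.mk_mem_prod hg₁G hg₂G) ?_
      simp only [Φ, dif_pos h]
      rfl
    · exact h.choose_spec.2.1 hzg₁
    · intro hz'
      exact (hg₂sub (h.choose_spec.2.2 hz')) rfl

/-- In a space whose square is Lindelöf, every clopen subset of the square admits a countable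
cover of the square by open rectangles each of which lies inside the set or its complement. -/
lemma exists_signed_cover {X : Type*} [TopologicalSpace X] [LindelofSpace (X × X)]
    (P : Set (X × X)) (hP : IsClopen P) :
    ∃ c : Set (Set X × Set X), c.Countable ∧
      (∀ r ∈ c, r.1 ×ˢ r.2 ⊆ P ∨ r.1 ×ˢ r.2 ⊆ Pᶜ) ∧
      ∀ p : X × X, ∃ r ∈ c, p ∈ r.1 ×ˢ r.2 := by
  classical
  have hbox : ∀ p : X × X, ∃ v w : Set X, IsOpen v ∧ IsOpen w ∧ p ∈ v ×ˢ w ∧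
      (v ×ˢ w ⊆ P ∨ v ×ˢ w ⊆ Pᶜ) := by
    intro p
    by_cases hp : p ∈ P
    · obtain ⟨v, w, hv, hw, h1, h2, hsub⟩ := (isOpen_prod_iff.1 hP.isOpen) p.1 p.2 (by simpa using hp)
      exact ⟨v, w, hv, hw, ⟨h1, h2⟩, Or.inl hsub⟩
    · obtain ⟨v, w, hv, hw, h1, h2, hsub⟩ :=
        (isOpen_prod_iff.1 hP.compl.isOpen) p.1 p.2 (by simpa using hp)
      exact ⟨v, w, hv, hw, ⟨h1, h2⟩, Or.inr hsub⟩
  choose v w hv hw hmem hsign using hbox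
  have hcov : (Set.univ : Set (X × X)) ⊆ ⋃ p : X × X, v p ×ˢ w p := fun p _ =>
    Set.mem_iUnion.2 ⟨p, hmem p⟩
  obtain ⟨t, htc, htcov⟩ := isLindelof_univ.elim_countable_subcover
    (fun p : X × X => v p ×ˢ w p) (fun p => (hv p).prod (hw p)) hcov
  refine ⟨(fun p => (v p, w p)) '' t, htc.image _, ?_, ?_⟩
  · rintro r ⟨p, -, rfl⟩
    exact hsign p
  · intro p
    have := htcov (Set.mem_univ p)
    simp only [Set.mem_iUnion] at this
    obtain ⟨q, hq, hpq⟩ := this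
    exact ⟨(v q, w q), Set.mem_image_of_mem _ hq, hpq⟩

/-- If `X` is projectively countable, `X²` is Lindelöf, and every continuous metrizable
image of `X²` is zero-dimensional (has a basis of clopen sets), then `X²` is projectively
countable. -/
theorem stmt19 {X : Type u} [TopologicalSpace X]
    (hpc : ProjectivelyCountable X)
    (hL : LindelofSpace (X × X))
    (hzd : ∀ (Y : Type u) (_ : TopologicalSpace Y), TopologicalSpace.MetrizableSpace Y →
      ∀ f : X × X → Y, Continuous f → Function.Surjective f →
        ∃ B : Set (Set Y), (∀ s ∈ B, IsClopen s) ∧ TopologicalSpace.IsTopologicalBasis B) :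
    ProjectivelyCountable (X × X) := by
  classical
  intro Y tY hsep hmet f hf
  rcases isEmpty_or_nonempty (X × X) with hE | hNE
  · rw [Set.range_eq_empty f]
    exact Set.countable_empty
  haveI hXne : Nonempty X := ⟨hNE.some.1⟩
  -- corestrict f to its range
  set Z := Set.range f with hZdef
  let f' : X × X → Z := Set.rangeFactorization f
  have hf' : Continuous f' := hf.subtype_mk _
  have hsurj : Function.Surjective f' := Set.rangeFactorization_surjective
  haveI : SecondCountableTopology Y := by
    letI := TopologicalSpace.metrizableSpaceMetric Y
    exact UniformSpace.secondCountable_of_separable Y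
  -- clopen basis of Z and countable separating subfamily
  obtain ⟨B, hBclopen, hBbasis⟩ := hzd (↥Z) inferInstance inferInstance f' hf' hsurj
  obtain ⟨C, hCB, hCc, hCsep⟩ :=
    exists_countable_separating19 B (fun s hs => (hBclopen s hs).isOpen) hBbasis
  -- signed rectangle covers for the (clopen) preimages of members of C
  have hPclopen : ∀ b ∈ C, IsClopen (f' ⁻¹' b) := fun b hb =>
    (hBclopen b (hCB hb)).preimage hf'
  have hcover : ∀ b ∈ C, ∃ c : Set (Set X × Set X), c.Countable ∧
      (∀ r ∈ c, r.1 ×ˢ r.2 ⊆ f' ⁻¹' b ∨ r.1 ×ˢ r.2 ⊆ (f' ⁻¹' b)ᶜ) ∧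
      ∀ p : X × X, ∃ r ∈ c, p ∈ r.1 ×ˢ r.2 := fun b hb =>
    exists_signed_cover _ (hPclopen b hb)
  choose! cov hcovc hcovsign hcovmem using hcover
  -- countable index set
  let D : Set (Set Z × (Set X × Set X) × (Set X × Set X)) :=
    {d | d.1 ∈ C ∧ d.2.1 ∈ cov d.1 ∧ d.2.2 ∈ cov d.1}
  have hDc : D.Countable := by
    have hsub : D ⊆ ⋃ b ∈ C, {b} ×ˢ (cov b ×ˢ cov b) := by
      rintro ⟨b, r, s⟩ ⟨hb, hr, hs⟩
      exact Set.mem_biUnion hb (Set.mk_mem_prod rfl (Set.mk_mem_prod hr hs))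
    exact (hCc.biUnion fun b hb =>
      (Set.countable_singleton b).prod ((hcovc b hb).prod (hcovc b hb))).mono hsub
  haveI := hDc.to_subtype
  -- test points
  let trow : Set X × Set X → Set X × Set X → X := fun r s =>
    if h : (r.2 ∩ s.2).Nonempty then h.choose else Classical.arbitrary X
  let tcol : Set X × Set X → Set X × Set X → X := fun r s =>
    if h : (r.1 ∩ s.1).Nonempty then h.choose else Classical.arbitrary X
  have htrow : ∀ r s : Set X × Set X, (r.2 ∩ s.2).Nonempty → trow r s ∈ r.2 ∩ s.2 := by
    intro r s h
    simp only [trow, dif_pos h]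
    exact h.choose_spec
  have htcol : ∀ r s : Set X × Set X, (r.1 ∩ s.1).Nonempty → tcol r s ∈ r.1 ∩ s.1 := by
    intro r s h
    simp only [tcol, dif_pos h]
    exact h.choose_spec
  -- the encoding map
  let N : X → (D → Bool × Bool) := fun x d =>
    ((f' ⁻¹' d.1.1).boolIndicator (x, trow d.1.2.1 d.1.2.2),
     (f' ⁻¹' d.1.1).boolIndicator (tcol d.1.2.1 d.1.2.2, x))
  have hNcont : Continuous N := by
    apply continuous_pi
    intro d
    have hcl : IsClopen (f' ⁻¹' d.1.1) := hPclopen d.1.1 d.2.1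
    refine Continuous.prodMk ?_ ?_
    · exact ((continuous_boolIndicator_iff_isClopen _).2 hcl).comp
        (continuous_id.prodMk continuous_const)
    · exact ((continuous_boolIndicator_iff_isClopen _).2 hcl).comp
        (continuous_const.prodMk continuous_id)
  have hNrange : (Set.range N).Countable :=
    hpc (D → Bool × Bool) inferInstance inferInstance inferInstance N hNcont
  -- rows are determined
  have step_row : ∀ b ∈ C, ∀ x x' y : X, N x = N x' →
      ((x, y) ∈ f' ⁻¹' b ↔ (x', y) ∈ f' ⁻¹' b) := by
    intro b hb x x' y hagree
    obtain ⟨r, hr, hmr⟩ := hcovmem b hb (x, y)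
    obtain ⟨s, hs, hms⟩ := hcovmem b hb (x', y)
    rw [Set.mem_prod] at hmr hms
    have hne : (r.2 ∩ s.2).Nonempty := ⟨y, hmr.2, hms.2⟩
    have ht := htrow r s hne
    set t := trow r s with htdef
    have hd : (b, r, s) ∈ D := ⟨hb, hr, hs⟩
    have hcoord : (f' ⁻¹' b).boolIndicator (x, t) = (f' ⁻¹' b).boolIndicator (x', t) :=
      congrArg Prod.fst (congrFun hagree ⟨(b, r, s), hd⟩)
    have hxt : (x, t) ∈ f' ⁻¹' b ↔ (x', t) ∈ f' ⁻¹' b := by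
      rw [Set.mem_iff_boolIndicator, Set.mem_iff_boolIndicator, hcoord]
    rcases hcovsign b hb r hr with hr1 | hr0 <;> rcases hcovsign b hb s hs with hs1 | hs0
    · exact iff_of_true (hr1 (Set.mem_prod.2 hmr)) (hs1 (Set.mem_prod.2 hms))
    · exact absurd (hxt.1 (hr1 (Set.mk_mem_prod hmr.1 ht.1)))
        (hs0 (Set.mk_mem_prod hms.1 ht.2))
    · exact absurd (hxt.2 (hs1 (Set.mk_mem_prod hms.1 ht.2)))
        (hr0 (Set.mk_mem_prod hmr.1 ht.1))
    · exact iff_of_false (hr0 (Set.mem_prod.2 hmr)) (hs0 (Set.mem_prod.2 hms))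
  -- columns are determined
  have step_col : ∀ b ∈ C, ∀ y y' x : X, N y = N y' →
      ((x, y) ∈ f' ⁻¹' b ↔ (x, y') ∈ f' ⁻¹' b) := by
    intro b hb y y' x hagree
    obtain ⟨r, hr, hmr⟩ := hcovmem b hb (x, y)
    obtain ⟨s, hs, hms⟩ := hcovmem b hb (x, y')
    rw [Set.mem_prod] at hmr hms
    have hne : (r.1 ∩ s.1).Nonempty := ⟨x, hmr.1, hms.1⟩
    have ht := htcol r s hne
    set t := tcol r s with htdef
    have hd : (b, r, s) ∈ D := ⟨hb, hr, hs⟩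
    have hcoord : (f' ⁻¹' b).boolIndicator (t, y) = (f' ⁻¹' b).boolIndicator (t, y') :=
      congrArg Prod.snd (congrFun hagree ⟨(b, r, s), hd⟩)
    have hty : (t, y) ∈ f' ⁻¹' b ↔ (t, y') ∈ f' ⁻¹' b := by
      rw [Set.mem_iff_boolIndicator, Set.mem_iff_boolIndicator, hcoord]
    rcases hcovsign b hb r hr with hr1 | hr0 <;> rcases hcovsign b hb s hs with hs1 | hs0
    · exact iff_of_true (hr1 (Set.mem_prod.2 hmr)) (hs1 (Set.mem_prod.2 hms))
    · exact absurd (hty.1 (hr1 (Set.mk_mem_prod ht.1 hmr.2)))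
        (hs0 (Set.mk_mem_prod ht.2 hms.2))
    · exact absurd (hty.2 (hs1 (Set.mk_mem_prod ht.2 hms.2)))
        (hr0 (Set.mk_mem_prod ht.1 hmr.2))
    · exact iff_of_false (hr0 (Set.mem_prod.2 hmr)) (hs0 (Set.mem_prod.2 hms))
  -- the value of f is determined by the encodings
  have det : ∀ x x' y y' : X, N x = N x' → N y = N y' → f (x, y) = f (x', y') := by
    intro x x' y y' hx hy
    by_contra hne
    have hne' : f' (x, y) ≠ f' (x', y') := by
      intro h
      exact hne (congrArg Subtype.val h)
    obtain ⟨b, hbC, hmem, hnot⟩ := hCsep _ _ hne'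
    have h1 : (x, y) ∈ f' ⁻¹' b := hmem
    have h2 : (x', y) ∈ f' ⁻¹' b := (step_row b hbC x x' y hx).1 h1
    have h3 : (x', y') ∈ f' ⁻¹' b := (step_col b hbC y y' x' hy).1 h2
    exact hnot h3
  -- conclude: the range of f injects into (range N) × (range N)
  haveI : Countable ↥(Set.range N) := hNrange.to_subtype
  have : Countable ↥(Set.range f) := by
    have hchoice : ∀ z : ↥(Set.range f), ∃ p : X × X, f p = (z : Y) := fun z => z.2
    choose g hg using hchoice
    let F : ↥(Set.range f) → ↥(Set.range N) × ↥(Set.range N) := fun z =>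
      (⟨N (g z).1, Set.mem_range_self _⟩, ⟨N (g z).2, Set.mem_range_self _⟩)
    have hFinj : Function.Injective F := by
      intro z z' hzz
      have h1 : N (g z).1 = N (g z').1 := congrArg Subtype.val (congrArg Prod.fst hzz)
      have h2 : N (g z).2 = N (g z').2 := congrArg Subtype.val (congrArg Prod.snd hzz)
      have := det _ _ _ _ h1 h2
      apply Subtype.ext
      rw [← hg z, ← hg z']
      simpa using this
    exact Function.Injective.countable hFinj
  exact Set.countable_coe_iff.mp this
end
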